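/- Let p ∈ Γ* and m ∈ ℕ⁺, and let f^p_m := {q ∈ Γ* : p is not a subsequence of q and |q| ≤ m}. Then: (1) the duplicator has a winning strategy in the game G_{𝓕(f^p_m)}(Ã^p_m, B̃^p_m); and (2) for every first-order sentence ψ over τ⁺ with W(qs(ψ)) ⊆ f^p_m, if Ã^p_m ⊨ ψ then B̃^p_m ⊨ ψ. -/

import Mathlib

namespace QSH

open FirstOrder Language

/-! ### Γ-labelled forests -/

/-- The two quantifier labels `∃` and `∀` (the set Γ). -/
inductive Quant : Type where
  | ex : Quant
  | fa : Quant
deriving DecidableEq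

instance instFintypeQuant : Fintype Quant :=
  ⟨{Quant.ex, Quant.fa}, fun x => by cases x <;> simp⟩

instance : Inhabited Quant := ⟨.ex⟩

/-- A Γ-labelled directed graph: a type of nodes, an arc relation
(directed from parent to child) and a labelling of nodes by `∃`/`∀`.
Γ-labelled forests and quantifier structures of formulas are such graphs. -/
structure QGraph : Type 1 where
  V : Type
  arc : V → V → Prop
  lab : V → Quant

/-- `S₁ ⪯ₑ S₂`: there is a (not necessarily injective) label-preserving map `ι`
from the nodes of `S₁` to the nodes of `S₂` such that whenever `S₁` has an arc
from `x` to `y`, `S₂` has a nontrivial directed path from `ι x` to `ι y`. -/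
def QGraph.Embeds (S₁ S₂ : QGraph) : Prop :=
  ∃ ι : S₁.V → S₂.V,
    (∀ v, S₂.lab (ι v) = S₁.lab v) ∧
    ∀ x y, S₁.arc x y → Relation.TransGen S₂.arc (ι x) (ι y)

/-- `W(S)`: the set of words in Γ* that are subsequences of the label-words
read along directed paths of `S`. -/
def QGraph.Words (S : QGraph) : Set (List Quant) :=
  { w | ∃ l : List S.V, l.Chain' S.arc ∧ w.Sublist (l.map S.lab) }

/-- Isomorphism of Γ-labelled graphs ("having the same quantifier structure"). -/
def QGraph.Iso (G H : QGraph) : Prop :=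
  ∃ e : G.V ≃ H.V, (∀ v, H.lab (e v) = G.lab v) ∧ ∀ x y, G.arc x y ↔ H.arc (e x) (e y)

/-- A root: a node with no incoming arc. -/
def QGraph.isRoot (S : QGraph) (v : S.V) : Prop := ∀ w, ¬ S.arc w v

/-- The empty Γ-labelled graph. -/
def QGraph.empty : QGraph :=
  ⟨Empty, fun _ _ => False, fun x => x.elim⟩

/-- Disjoint union of two Γ-labelled graphs. -/
def QGraph.union (G H : QGraph) : QGraph where
  V := G.V ⊕ H.V
  arc := Sum.LiftRel G.arc H.arc
  lab := Sum.elim G.lab H.lab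

/-- Add a new root labelled `q`, with an arc to each root of `G`. -/
def QGraph.addRoot (q : Quant) (G : QGraph) : QGraph where
  V := Option G.V
  arc x y :=
    match x, y with
    | some a, some b => G.arc a b
    | none, some b => G.isRoot b
    | _, none => False
  lab x := x.elim q G.lab

/-- A finite Γ-labelled forest: a finite Γ-labelled digraph in which every node
has at most one parent and which has no directed cycles, i.e. a finite disjoint
union of rooted trees with arcs directed from parent to child. -/
structure LForest : Type 1 extends QGraph where
  finV : Finite V
  parent_unique : ∀ ⦃x y z : V⦄, arc x z → arc y z → x = y
  acyclic : ∀ x : V, ¬ Relation.TransGen arc x x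

/-! ### First-order formulas in negation normal form, their semantics, and
their quantifier structures -/

universe u v w

/-- Realization of a term, with the structure as explicit data. -/
def TermRealize {L : FirstOrder.Language.{u, v}} {M : Type w} (str : L.Structure M) {α : Type*}
    (vmap : α → M) : L.Term α → M
  | .var a => vmap a
  | .func f ts => str.funMap f fun i => TermRealize str vmap (ts i)

/-- First-order formulas in negation normal form with free variables among `Fin n`. -/
inductive NNF (L : FirstOrder.Language.{u, v}) : ℕ → Type (max u v) where
  | verum {n : ℕ} : NNF L n
  | falsum {n : ℕ} : NNF L n
  | eq {n : ℕ} (t₁ t₂ : L.Term (Fin n)) : NNF L n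
  | ne {n : ℕ} (t₁ t₂ : L.Term (Fin n)) : NNF L n
  | rel {n m : ℕ} (R : L.Relations m) (ts : Fin m → L.Term (Fin n)) : NNF L n
  | nrel {n m : ℕ} (R : L.Relations m) (ts : Fin m → L.Term (Fin n)) : NNF L n
  | conj {n : ℕ} (φ ψ : NNF L n) : NNF L n
  | disj {n : ℕ} (φ ψ : NNF L n) : NNF L n
  | ex {n : ℕ} (φ : NNF L (n + 1)) : NNF L n
  | fa {n : ℕ} (φ : NNF L (n + 1)) : NNF L n

/-- Tarskian satisfaction for `NNF` formulas. -/
def NNF.Realize {L : FirstOrder.Language.{u, v}} {M : Type w} (str : L.Structure M) :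
    ∀ {n : ℕ}, NNF L n → (Fin n → M) → Prop
  | _, .verum, _ => True
  | _, .falsum, _ => False
  | _, .eq t₁ t₂, vv => TermRealize str vv t₁ = TermRealize str vv t₂
  | _, .ne t₁ t₂, vv => TermRealize str vv t₁ ≠ TermRealize str vv t₂
  | _, .rel R ts, vv => str.RelMap R fun i => TermRealize str vv (ts i)
  | _, .nrel R ts, vv => ¬ str.RelMap R fun i => TermRealize str vv (ts i)
  | _, .conj φ ψ, vv => φ.Realize str vv ∧ ψ.Realize str vv
  | _, .disj φ ψ, vv => φ.Realize str vv ∨ ψ.Realize str vv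
  | _, .ex φ, vv => ∃ x : M, φ.Realize str (Fin.snoc vv x)
  | _, .fa φ, vv => ∀ x : M, φ.Realize str (Fin.snoc vv x)

/-- The quantifier structure `qs φ` of an NNF formula: empty for literals,
disjoint union for conjunction/disjunction, and a new labelled root
above `qs` of the body for quantifiers. -/
def NNF.qs {L : FirstOrder.Language.{u, v}} : ∀ {n : ℕ}, NNF L n → QGraph
  | _, .verum => QGraph.empty
  | _, .falsum => QGraph.empty
  | _, .eq _ _ => QGraph.empty
  | _, .ne _ _ => QGraph.empty
  | _, .rel _ _ => QGraph.empty
  | _, .nrel _ _ => QGraph.empty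
  | _, .conj φ ψ => φ.qs.union ψ.qs
  | _, .disj φ ψ => φ.qs.union ψ.qs
  | _, .ex φ => φ.qs.addRoot .ex
  | _, .fa φ => φ.qs.addRoot .fa

/-- Renaming of free variables. -/
def NNF.relabel {L : FirstOrder.Language.{u, v}} : ∀ {n k : ℕ}, NNF L n → (Fin n → Fin k) → NNF L k
  | _, _, .verum, _ => .verum
  | _, _, .falsum, _ => .falsum
  | _, _, .eq t₁ t₂, f => .eq (t₁.relabel f) (t₂.relabel f)
  | _, _, .ne t₁ t₂, f => .ne (t₁.relabel f) (t₂.relabel f)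
  | _, _, .rel R ts, f => .rel R fun i => (ts i).relabel f
  | _, _, .nrel R ts, f => .nrel R fun i => (ts i).relabel f
  | _, _, .conj φ ψ, f => .conj (φ.relabel f) (ψ.relabel f)
  | _, _, .disj φ ψ, f => .disj (φ.relabel f) (ψ.relabel f)
  | _, _, .ex φ, f => .ex (φ.relabel (Fin.snoc (fun i => (f i).castSucc) (Fin.last _)))
  | _, _, .fa φ, f => .fa (φ.relabel (Fin.snoc (fun i => (f i).castSucc) (Fin.last _)))

/-- Substitution of terms for free variables. -/
def NNF.subst {L : FirstOrder.Language.{u, v}} :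
    ∀ {n k : ℕ}, NNF L n → (Fin n → L.Term (Fin k)) → NNF L k
  | _, _, .verum, _ => .verum
  | _, _, .falsum, _ => .falsum
  | _, _, .eq t₁ t₂, f => .eq (t₁.subst f) (t₂.subst f)
  | _, _, .ne t₁ t₂, f => .ne (t₁.subst f) (t₂.subst f)
  | _, _, .rel R ts, f => .rel R fun i => (ts i).subst f
  | _, _, .nrel R ts, f => .nrel R fun i => (ts i).subst f
  | _, _, .conj φ ψ, f => .conj (φ.subst f) (ψ.subst f)
  | _, _, .disj φ ψ, f => .disj (φ.subst f) (ψ.subst f)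
  | _, _, .ex φ, f =>
      .ex (φ.subst (Fin.snoc (fun i => (f i).relabel Fin.castSucc) (Term.var (Fin.last _))))
  | _, _, .fa φ, f =>
      .fa (φ.subst (Fin.snoc (fun i => (f i).relabel Fin.castSucc) (Term.var (Fin.last _))))

/-! ### Concrete signatures -/

/-- The relation symbols of the signature `τ = ⟨E⟩` of digraphs. -/
inductive TauRel : ℕ → Type where
  | E : TauRel 2

/-- The signature `τ = ⟨E⟩` of digraphs: one binary relation symbol. -/
def tau : FirstOrder.Language := ⟨fun _ => Empty, TauRel⟩

/-- The function symbols of `τ⁺`: the single constant `r`. -/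
inductive TauPlusFun : ℕ → Type where
  | r : TauPlusFun 0

/-- The relation symbols of `τ⁺`: `U` unary, `R`, `B` binary. -/
inductive TauPlusRel : ℕ → Type where
  | U : TauPlusRel 1
  | R : TauPlusRel 2
  | B : TauPlusRel 2

/-- The signature `τ⁺ = ⟨U, R, B, r⟩`. -/
def tauPlus : FirstOrder.Language := ⟨TauPlusFun, TauPlusRel⟩

/-- The relation symbols of `τ⁺ᴼᴿᴰ`: those of `τ⁺` together with `≤`. -/
inductive TauPlusOrdRel : ℕ → Type where
  | U : TauPlusOrdRel 1
  | R : TauPlusOrdRel 2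
  | B : TauPlusOrdRel 2
  | le : TauPlusOrdRel 2

/-- The signature `τ⁺ᴼᴿᴰ = ⟨U, R, B, r, ≤⟩`. -/
def tauPlusOrd : FirstOrder.Language := ⟨TauPlusFun, TauPlusOrdRel⟩

/-- The relation symbols of `⟨E, ≤⟩`. -/
inductive TauOrdRel : ℕ → Type where
  | E : TauOrdRel 2
  | le : TauOrdRel 2

/-- The signature `⟨E, ≤⟩` of ordered digraphs. -/
def tauOrd : FirstOrder.Language := ⟨fun _ => Empty, TauOrdRel⟩

/-- A bundled finite `L`-structure. -/
structure FinStr (L : FirstOrder.Language.{u, v}) where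
  carrier : Type
  fin : Finite carrier
  str : L.Structure carrier

/-- Satisfaction of an NNF sentence in a bundled finite structure. -/
def FinStr.Sat {L : FirstOrder.Language.{u, v}} (M : FinStr L) (φ : NNF L 0) : Prop :=
  φ.Realize M.str fun i => i.elim0

/-- `r` is a linear order (transitive, antisymmetric and total). -/
def IsLinearOrderRel {M : Type*} (r : M → M → Prop) : Prop :=
  (∀ x y z, r x y → r y z → r x z) ∧ (∀ x y, r x y → r y x → x = y) ∧ (∀ x y, r x y ∨ r y x)

/-! ### The Ehrenfeucht–Fraïssé style game `G_S(𝔄, 𝔅)` -/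

/-- `(as, bs)` defines a partial isomorphism between `A` and `B`: the map sending
the interpretations of the constants (more generally, of all closed terms in the
picked elements) of `A` to those of `B` preserves equalities and all relations. -/
def PIso {L : FirstOrder.Language.{u, v}} {A : Type*} {B : Type*} (sA : L.Structure A)
    (sB : L.Structure B) {t : ℕ} (as : Fin t → A) (bs : Fin t → B) : Prop :=
  (∀ t₁ t₂ : L.Term (Fin t),
      TermRealize sA as t₁ = TermRealize sA as t₂ ↔
        TermRealize sB bs t₁ = TermRealize sB bs t₂) ∧
  (∀ (m : ℕ) (R : L.Relations m) (ts : Fin m → L.Term (Fin t)),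
      (sA.RelMap R fun i => TermRealize sA as (ts i)) ↔
        (sB.RelMap R fun i => TermRealize sB bs (ts i)))

/-- The history of a play (the pairs of elements picked so far, in order)
defines a partial isomorphism. -/
def HistOK {L : FirstOrder.Language.{u, v}} {A B : Type*} (sA : L.Structure A) (sB : L.Structure B)
    (h : List (A × B)) : Prop :=
  PIso sA sB (fun i : Fin h.length => (h.get i).1) (fun i : Fin h.length => (h.get i).2)

/-- The duplicator can survive (at least) `k` more rounds of the game, the token
being on node `v` and `h` being the history of picked pairs: in the round at `v`,
if `v` is labelled `∃` the spoiler picks in `A` and the duplicator answers in `B`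
(dually for `∀`); the extended history must still be a partial isomorphism, and
she must survive whichever child of `v` the spoiler moves the token to. -/
def DWinN {L : FirstOrder.Language.{u, v}} {A B : Type*} (S : QGraph) (sA : L.Structure A)
    (sB : L.Structure B) : ℕ → S.V → List (A × B) → Prop
  | 0, _, _ => True
  | k + 1, v, h =>
    match S.lab v with
    | .ex => ∀ a : A, ∃ b : B, HistOK sA sB (h ++ [(a, b)]) ∧
        ∀ w : S.V, S.arc v w → DWinN S sA sB k w (h ++ [(a, b)])
    | .fa => ∀ b : B, ∃ a : A, HistOK sA sB (h ++ [(a, b)]) ∧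
        ∀ w : S.V, S.arc v w → DWinN S sA sB k w (h ++ [(a, b)])

/-- The duplicator has a winning strategy in the game `G_S(𝔄, 𝔅)` played with the
initial history `h` (the empty history corresponds to the plain game): the initial
position must be a partial isomorphism, and whichever tree of the forest `S` the
spoiler picks, she can survive the play down that tree.  (Since `S` is a finite
forest, every play lasts at most `Nat.card S.V` rounds, so the fuel
`Nat.card S.V + 1` never runs out.) -/
def DupWinsFrom {L : FirstOrder.Language.{u, v}} {A B : Type*} (S : LForest) (sA : L.Structure A)
    (sB : L.Structure B) (h : List (A × B)) : Prop :=
  HistOK sA sB h ∧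
  ∀ v : S.V, S.toQGraph.isRoot v → DWinN S.toQGraph sA sB (Nat.card S.V + 1) v h

/-- The duplicator has a winning strategy in the game `G_S(𝔄, 𝔅)`. -/
def DupWins {L : FirstOrder.Language.{u, v}} {A B : Type*} (S : LForest) (sA : L.Structure A)
    (sB : L.Structure B) : Prop :=
  DupWinsFrom S sA sB []

end QSH
namespace QSH

open FirstOrder Language

/-! ### The forest `𝓕(P)` of a set of prefixes: the prefix tree (trie) of `P` -/

private lemma transGen_nat_lt {α : Type*} {r : α → α → Prop} (f : α → ℕ)
    (h : ∀ x y, r x y → f x < f y) {x y : α} (hxy : Relation.TransGen r x y) :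
    f x < f y := by
  induction hxy with
  | single h' => exact h _ _ h'
  | tail _ h' ih => exact ih.trans (h _ _ h')

/-- The Γ-labelled graph `𝓕(P)` for a set of prefixes `P ⊆ Γ*`: its nodes are the
nonempty initial segments of words of `P`, a node `w` is labelled by its last
letter, and there is an arc from `w` to `w ++ [s]`.  This is the forest obtained
by the recursive definition: `𝓕(∅)` is empty, and writing
`P = (∃ * P₁) ∪ (∀ * P₂)`, `𝓕(P)` is the disjoint union of a tree with an
`∃`-labelled root with an arc to each root of `𝓕(P₁)` and a tree with a
`∀`-labelled root with an arc to each root of `𝓕(P₂)` (omitting a tree when the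
corresponding part of `P` is empty). -/
abbrev trieGraph (P : Set (List Quant)) : QGraph where
  V := {w : List Quant // w ≠ [] ∧ ∃ q ∈ P, w <+: q}
  arc x y := ∃ s : Quant, (y : List Quant) = (x : List Quant) ++ [s]
  lab w := (w : List Quant).getLast w.2.1

/-- For finite `P`, the forest `𝓕(P)` as a finite Γ-labelled forest. -/
noncomputable def forestOf (P : Set (List Quant)) (hP : P.Finite) : LForest where
  toQGraph := trieGraph P
  finV := by
    have hfin : {w : List Quant | w ≠ [] ∧ ∃ q ∈ P, w <+: q}.Finite := by
      refine Set.Finite.subset (hP.biUnion fun q _ => q.inits.finite_toSet) ?_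
      rintro w ⟨-, q, hq, hpre⟩
      exact Set.mem_biUnion hq ((List.mem_inits _ _).mpr hpre)
    exact hfin.to_subtype
  parent_unique := by
    rintro x y z ⟨s, hs⟩ ⟨s', hs'⟩
    apply Subtype.ext
    have h2 : (x : List Quant) ++ [s] = (y : List Quant) ++ [s'] := by rw [← hs, ← hs']
    exact (List.append_inj' h2 rfl).1
  acyclic := by
    intro x hx
    have key : ∀ a b, (trieGraph P).arc a b →
        (a : List Quant).length < (b : List Quant).length := by
      rintro a b ⟨s, hs⟩
      simp [hs]
    exact absurd (transGen_nat_lt _ key hx) (lt_irrefl _)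

/-- A prefix `p ∈ Γ*`, viewed as a Γ-labelled degenerate tree (a directed path
whose `i`-th node is labelled `p[i]`). -/
noncomputable def pathForest (p : List Quant) : LForest :=
  forestOf {p} (Set.finite_singleton p)

/-- `f^p_m`: the set of prefixes of length at most `m` in which `p` does not embed
(i.e. of which `p` is not a subsequence). -/
def fpm (p : List Quant) (m : ℕ) : Set (List Quant) :=
  {q | ¬ p.Sublist q ∧ q.length ≤ m}

lemma fpm_finite (p : List Quant) (m : ℕ) : (fpm p m).Finite := by
  refine Set.Finite.subset (List.finite_length_le Quant m) ?_
  rintro q ⟨-, hq⟩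
  exact hq

end QSH
namespace QSH

open FirstOrder Language

/-! ### The edge-coloured trees `Ã^p_m` and `B̃^p_m` -/

/-- A finite tree with `Bool`-coloured nodes (`true` = black) and
`Bool`-coloured edges to the children (`true` = red, `false` = blue). -/
inductive CT : Type where
  | node : Bool → List (Bool × CT) → CT

/-- Is the root of this tree black? -/
def CT.isBlack : CT → Bool
  | .node b _ => b

/-- The children of the root, together with the colours of the edges to them. -/
def CT.children : CT → List (Bool × CT)
  | .node _ cs => cs

/-- The subtree at a given address (a list of child indices), if it exists. -/
def CT.sub : List ℕ → CT → Option CT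
  | [], t => some t
  | i :: rest, t =>
    match t.children[i]? with
    | some p => CT.sub rest p.2
    | none => none

/-- The nodes of the tree `t`: the valid addresses. -/
abbrev CT.Node (t : CT) : Type := {addr : List ℕ // (CT.sub addr t).isSome = true}

/-- The root of the tree. -/
def CT.rootNode (t : CT) : t.Node := ⟨[], rfl⟩

/-- There is an edge of colour `col` from the node at address `x` to the node at
address `y` (so `y` is a child of `x`). -/
def CT.edgeC (t : CT) (col : Bool) (x y : List ℕ) : Prop :=
  ∃ (i : ℕ) (s : CT) (p : Bool × CT),
    CT.sub x t = some s ∧ s.children[i]? = some p ∧ p.1 = col ∧ y = x ++ [i]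

/-- The node at address `x` is black. -/
def CT.blackAt (t : CT) (x : List ℕ) : Prop :=
  ∃ s, CT.sub x t = some s ∧ s.isBlack = true

/-- The node at address `x` is a leaf. -/
def CT.leafAt (t : CT) (x : List ℕ) : Prop :=
  ∃ s, CT.sub x t = some s ∧ s.children = []

/-- Exchange the colours of all edges (red ↔ blue): `Ã^{-p}_m` from `Ã^p_m`. -/
def CT.swap : CT → CT
  | .node b cs => .node b (cs.attach.map fun p => (!p.1.1, CT.swap p.1.2))
decreasing_by
  obtain ⟨⟨c, t⟩, hm⟩ := p
  have h := List.sizeOf_lt_of_mem hm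
  simp only [Prod.mk.sizeOf_spec, CT.node.sizeOf_spec] at h ⊢
  omega

/-- Join two trees at their roots (the shared root, the "junction point"). -/
def CT.joinRoots : CT → CT → CT
  | .node b cs, .node _ ds => .node b (cs ++ ds)

/-- A depth-1 tree whose edges are all red, with `kb` black leaves and
`kw` non-black leaves. -/
def starT (kb kw : ℕ) : CT :=
  .node false
    (List.replicate kb (true, CT.node true []) ++ List.replicate kw (true, CT.node false []))

/-- The pair `(Ã^p_m, B̃^p_m)` for the prefix `p = s :: q`, built by recursion:
* `Ã^∃_m` is a depth-1 all-red tree with `2m+1` leaves, exactly one black, and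
  `B̃^∃_m` has `2m` leaves, none black;
* `Ã^∀_m` has `2m` leaves, all black, and `B̃^∀_m` has `2m+1` leaves, all black
  except one;
* for `p = ∃q`, with `D^{X,Y}_{q,m}` the join at the roots of a copy of `X̃^q_m`
  and a copy of `Ỹ^{-q}_m`, `Ã^{∃q}_m` has a root joined by red edges to the
  junction points of one copy of `D^{A,A}`, `m` copies of `D^{A,B}` and `m`
  copies of `D^{B,A}`, while `B̃^{∃q}_m` omits the copy of `D^{A,A}`;
* `Ã^{∀q}_m` is defined as `B̃^{∃q}_m`, and `B̃^{∀q}_m` as `Ã^{∃q}_m` with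
  `D^{A,A}` replaced by a copy of `D^{B,B}`. -/
def ABt : Quant → List Quant → ℕ → CT × CT
  | .ex, [], m => (starT 1 (2 * m), starT 0 (2 * m))
  | .fa, [], m => (starT (2 * m) 0, starT (2 * m) 1)
  | .ex, s :: q, m =>
    let P := ABt s q m
    let DAA := P.1.joinRoots P.1.swap
    let DAB := P.1.joinRoots P.2.swap
    let DBA := P.2.joinRoots P.1.swap
    ( .node false ((true, DAA) ::
        (List.replicate m (true, DAB) ++ List.replicate m (true, DBA))),
      .node false (List.replicate m (true, DAB) ++ List.replicate m (true, DBA)) )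
  | .fa, s :: q, m =>
    let P := ABt s q m
    let DAB := P.1.joinRoots P.2.swap
    let DBA := P.2.joinRoots P.1.swap
    let DBB := P.2.joinRoots P.2.swap
    ( .node false (List.replicate m (true, DAB) ++ List.replicate m (true, DBA)),
      .node false ((true, DBB) ::
        (List.replicate m (true, DAB) ++ List.replicate m (true, DBA))) )

/-- The structure `Ã^p_m` (for nonempty `p`). -/
def Atil : List Quant → ℕ → CT
  | [], _ => CT.node false []
  | s :: q, m => (ABt s q m).1

/-- The structure `B̃^p_m` (for nonempty `p`). -/
def Btil : List Quant → ℕ → CT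
  | [], _ => CT.node false []
  | s :: q, m => (ABt s q m).2

/-- The `τ⁺`-interpretation of the constant `r` on the nodes of `t`: the root. -/
def ctFunMap (t : CT) : ∀ {n : ℕ}, TauPlusFun n → (Fin n → t.Node) → t.Node
  | _, .r, _ => t.rootNode

/-- The `τ⁺`-interpretation of `U`, `R`, `B` on the nodes of `t`: `U` holds of
the black nodes, `R` of the red edges and `B` of the blue edges. -/
def ctRelMap (t : CT) : ∀ {n : ℕ}, TauPlusRel n → (Fin n → t.Node) → Prop
  | _, .U, vv => t.blackAt (vv 0).1
  | _, .R, vv => t.edgeC true (vv 0).1 (vv 1).1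
  | _, .B, vv => t.edgeC false (vv 0).1 (vv 1).1

/-- The coloured tree `t` as a `τ⁺`-structure. -/
def CT.Str (t : CT) : tauPlus.Structure t.Node where
  funMap := fun f => ctFunMap t f
  RelMap := fun Rl => ctRelMap t Rl

/-- Satisfaction of a `τ⁺`-sentence in the coloured tree `t`. -/
def CTSat (t : CT) (φ : NNF tauPlus 0) : Prop :=
  φ.Realize t.Str fun i => i.elim0

end QSH
namespace QSH

open FirstOrder Language

/-! ### The `τ⁺`-formulas `ψ̃_p`, `ψ̃_{-p}` and the sentences `φ̃_p`, `φ̃_{-p}` -/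

/-- The pair `(ψ̃_p(y), ψ̃_{-p}(y))` of `τ⁺`-formulas with one free variable `y`:
`ψ̃_ε(x) = ψ̃_{-ε}(x) := U(x)`;
`ψ̃_{∃q}(y) := ∃x (R y x ∧ ψ̃_q(x) ∧ ψ̃_{-q}(x))`;
`ψ̃_{∀q}(y) := ∀x (R y x → ψ̃_q(x) ∨ ψ̃_{-q}(x))`;
and dually with `B` in place of `R` for `ψ̃_{-∃q}`, `ψ̃_{-∀q}`
(written in negation normal form). -/
def psiPair : List Quant → NNF tauPlus 1 × NNF tauPlus 1
  | [] => (.rel TauPlusRel.U ![Term.var 0], .rel TauPlusRel.U ![Term.var 0])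
  | .ex :: q =>
    let P := psiPair q
    let f := P.1.relabel fun _ => (1 : Fin 2)
    let g := P.2.relabel fun _ => (1 : Fin 2)
    ( .ex (.conj (.rel TauPlusRel.R ![Term.var 0, Term.var 1]) (.conj f g)),
      .ex (.conj (.rel TauPlusRel.B ![Term.var 0, Term.var 1]) (.conj f g)) )
  | .fa :: q =>
    let P := psiPair q
    let f := P.1.relabel fun _ => (1 : Fin 2)
    let g := P.2.relabel fun _ => (1 : Fin 2)
    ( .fa (.disj (.nrel TauPlusRel.R ![Term.var 0, Term.var 1]) (.disj f g)),
      .fa (.disj (.nrel TauPlusRel.B ![Term.var 0, Term.var 1]) (.disj f g)) )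

/-- The constant symbol `r` as a closed `τ⁺`-term. -/
def rTerm : tauPlus.Term (Fin 0) := Term.func TauPlusFun.r ![]

/-- The sentence `φ̃_p := ψ̃_p(r)`. -/
def phiTil (p : List Quant) : NNF tauPlus 0 := (psiPair p).1.subst fun _ => rTerm

/-- The sentence `φ̃_{-p} := ψ̃_{-p}(r)`. -/
def phiTilNeg (p : List Quant) : NNF tauPlus 0 := (psiPair p).2.subst fun _ => rTerm

end QSH
namespace QSH

open FirstOrder Language

/-! ### The reduction from `τ⁺` to `τ = ⟨E⟩` -/

/-- The atom `E xᵢ xⱼ` over `τ`. -/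
def Eat {n : ℕ} (i j : Fin n) : NNF tau n := .rel TauRel.E ![Term.var i, Term.var j]

/-- The negated atom `¬ E xᵢ xⱼ` over `τ`. -/
def nEat {n : ℕ} (i j : Fin n) : NNF tau n := .nrel TauRel.E ![Term.var i, Term.var j]

/-- The pair `(ψ'_q(x, y), ψ'_{-q}(x, y))` of `τ`-formulas with two free
variables (variable `0` is `x`, variable `1` is `y`):
`ψ'_ε(x,y) = ψ'_{-ε}(x,y) := Exy ∧ Eyx`;
`ψ'_{∃q}(x,y) := ∃z (Eyz ∧ z ≠ x ∧ ψ'_q(y,z) ∧ ψ'_{-q}(y,z))`;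
`ψ'_{∀q}(x,y) := ∀z (Eyz ∧ z ≠ x → ψ'_q(y,z) ∨ ψ'_{-q}(y,z))`;
and dually with `Ezy` in place of `Eyz` for `ψ'_{-∃q}`, `ψ'_{-∀q}`
(written in negation normal form). -/
def psiRed : List Quant → NNF tau 2 × NNF tau 2
  | [] => (.conj (Eat 0 1) (Eat 1 0), .conj (Eat 0 1) (Eat 1 0))
  | .ex :: q =>
    let P := psiRed q
    let f := P.1.relabel ![1, 2]
    let g := P.2.relabel ![1, 2]
    ( .ex (.conj (Eat 1 2) (.conj (.ne (Term.var 2) (Term.var 0)) (.conj f g))),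
      .ex (.conj (Eat 2 1) (.conj (.ne (Term.var 2) (Term.var 0)) (.conj f g))) )
  | .fa :: q =>
    let P := psiRed q
    let f := P.1.relabel ![1, 2]
    let g := P.2.relabel ![1, 2]
    ( .fa (.disj (nEat 1 2) (.disj (.eq (Term.var 2) (Term.var 0)) (.disj f g))),
      .fa (.disj (nEat 2 1) (.disj (.eq (Term.var 2) (Term.var 0)) (.disj f g))) )

/-- The pair `(ψ'_q(r, y), ψ'_{-q}(r, y))` after the transformation removing the
root: atoms `z ≠ r` are removed and atoms involving the root are replaced by
self-loops.  Variable `0` is `y`. -/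
def chiRed : List Quant → NNF tau 1 × NNF tau 1
  | [] => (.conj (Eat 0 0) (Eat 0 0), .conj (Eat 0 0) (Eat 0 0))
  | .ex :: q =>
    let P := psiRed q
    ( .ex (.conj (Eat 0 1) (.conj P.1 P.2)),
      .ex (.conj (Eat 1 0) (.conj P.1 P.2)) )
  | .fa :: q =>
    let P := psiRed q
    ( .fa (.disj (nEat 0 1) (.disj P.1 P.2)),
      .fa (.disj (nEat 1 0) (.disj P.1 P.2)) )

/-- `φ_{∃∃}`. -/
def phiEE : NNF tau 0 :=
  .ex (.conj (Eat 0 0)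
    (.conj (.ex (.conj (Eat 0 1) (.conj (Eat 1 0) (Eat 1 1))))
           (.ex (.conj (Eat 1 0) (.conj (Eat 0 1) (nEat 1 1))))))

/-- `φ_{∃∀}`. -/
def phiEA : NNF tau 0 :=
  .ex (.conj (Eat 0 0)
    (.conj (.fa (.disj (nEat 0 1) (.conj (Eat 1 0) (Eat 1 1))))
           (.fa (.disj (nEat 1 0) (.conj (Eat 0 1) (nEat 1 1))))))

/-- `φ_{∀∃}`. -/
def phiAE : NNF tau 0 :=
  .fa (.disj (nEat 0 0)
    (.disj (.ex (.conj (Eat 0 1) (.conj (Eat 1 0) (Eat 1 1))))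
           (.ex (.conj (Eat 1 0) (.conj (Eat 0 1) (nEat 1 1))))))

/-- `φ_{∀∀}`. -/
def phiAA : NNF tau 0 :=
  .fa (.disj (nEat 0 0)
    (.disj (.fa (.disj (nEat 0 1) (.conj (Eat 1 0) (Eat 1 1))))
           (.fa (.disj (nEat 1 0) (.conj (Eat 0 1) (nEat 1 1))))))

/-- The `τ`-sentence `φ_p`, obtained from `ψ'_p(r, r)` by replacing the atoms
involving the root by self-loops and removing the atoms `x ≠ r`; the ad hoc
sentences of the paper are used when `|p| = 2`. -/
def phiRed : List Quant → NNF tau 0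
  | [] => .verum
  | [Quant.ex, Quant.ex] => phiEE
  | [Quant.ex, Quant.fa] => phiEA
  | [Quant.fa, Quant.ex] => phiAE
  | [Quant.fa, Quant.fa] => phiAA
  | .ex :: q => .ex (.conj (Eat 0 0) (.conj (chiRed q).1 (chiRed q).2))
  | .fa :: q => .fa (.disj (nEat 0 0) (.disj (chiRed q).1 (chiRed q).2))

/-- The arc relation of the digraph obtained from the coloured tree `t` by the
reduction from `τ⁺` to `τ`:  red edges become forward arcs, blue edges become
backward arcs; arcs are added in both directions between every black leaf and
the junction point of its connected component (its ancestor just below the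
root); each edge from the (deleted) root to a junction point becomes a
self-loop at the junction point; and, when the condition `two` holds (i.e. when
`|p| = 2`), every leaf which is an endpoint of a red edge gets a self-loop. -/
def reducedE (t : CT) (two : Prop) (x y : List ℕ) : Prop :=
  t.edgeC true x y ∨ t.edgeC false y x ∨
  ((t.edgeC true [] x ∨ t.edgeC false [] x) ∧ x = y) ∨
  (t.blackAt x ∧ y = x.take 1) ∨ (t.blackAt y ∧ x = y.take 1) ∨
  (two ∧ x = y ∧ t.leafAt x ∧ ∃ z : List ℕ, t.edgeC true z x ∨ t.edgeC true x z)

/-- The non-root nodes of `t` (the universe after deleting the root). -/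
abbrev CT.NRNode (t : CT) : Type := {x : t.Node // x.1 ≠ []}

/-- Interpretation of `E`. -/
def redRelMap (t : CT) (two : Prop) : ∀ {n : ℕ}, TauRel n → (Fin n → t.NRNode) → Prop
  | _, .E, vv => reducedE t two (vv 0).1.1 (vv 1).1.1

/-- The digraph (`τ`-structure) obtained from `t` by the reduction from `τ⁺`
to `τ`. -/
def reducedStr (t : CT) (two : Prop) : tau.Structure t.NRNode where
  funMap := fun f => Empty.elim f
  RelMap := fun Rl => redRelMap t two Rl

/-- Satisfaction of a `τ`-sentence in the reduced digraph of `t`. -/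
def redSat (t : CT) (two : Prop) (φ : NNF tau 0) : Prop :=
  φ.Realize (reducedStr t two) fun i => i.elim0

end QSH
namespace QSH

/-! ### Rosen's map `f : Γ* → Γ_c*` -/

/-- The alphabet `Γ_c = {∃, ∀, ∃*, ∀*}`. -/
inductive QuantC : Type where
  | ex : QuantC
  | fa : QuantC
  | exStar : QuantC
  | faStar : QuantC
deriving DecidableEq

/-- The dual of a letter of Γ (swap `∃` and `∀`). -/
def Quant.dual : Quant → Quant
  | .ex => .fa
  | .fa => .ex

/-- The dual of a letter of `Γ_c` (swap `∃` with `∀` and `∃*` with `∀*`). -/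
def QuantC.dual : QuantC → QuantC
  | .ex => .fa
  | .fa => .ex
  | .exStar => .faStar
  | .faStar => .exStar

/-- `f` on a single maximal block: `f(∃ⁿ) = a₁ * ⋯ * a_{2n-1}` with `aᵢ = ∀*`
for odd `i` and `aᵢ = ∃` for even `i`, and dually for `f(∀ⁿ)`. -/
def fBlock : Quant → ℕ → List QuantC
  | .ex, n => QuantC.faStar :: (List.replicate (n - 1) [QuantC.ex, QuantC.faStar]).flatten
  | .fa, n => QuantC.exStar :: (List.replicate (n - 1) [QuantC.fa, QuantC.exStar]).flatten

/-- Rosen's map `f : Γ* → Γ_c*`: decompose `p` into maximal constant blocks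
`p = s₁^{i₁} * ⋯ * s_n^{i_n}` and concatenate the images of the blocks. -/
def fMap (p : List Quant) : List QuantC :=
  ((p.splitBy fun a b => a == b).map fun blk => fBlock blk.headI blk.length).flatten

end QSH
namespace QSH

open FirstOrder Language

/-! ### Joins of structures at a point, and automorphisms -/

/-- `e` is an automorphism of the (relational) structure `sA`. -/
def IsAuto {L : FirstOrder.Language} {A : Type*} (sA : L.Structure A) (e : A ≃ A) : Prop :=
  ∀ (n : ℕ) (R : L.Relations n) (vv : Fin n → A), sA.RelMap R vv ↔ sA.RelMap R (e ∘ vv)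

/-- The join `𝔄 ⊕ 𝔅` of two structures on subsets `A`, `B` of an ambient type:
the structure on `A ∪ B` in which each relation is interpreted as the union of
its interpretations in `𝔄` and `𝔅` (the signature is assumed relational). -/
def joinStructure {L : FirstOrder.Language} (hrel : ∀ n : ℕ, IsEmpty (L.Functions n))
    {Ω : Type} (A B : Set Ω) (sA : L.Structure ↥A) (sB : L.Structure ↥B) :
    L.Structure ↥(A ∪ B) where
  funMap := fun {n} f _ => ((hrel n).false f).elim
  RelMap := fun {n} R vv =>
    (∃ u : Fin n → ↥A, (∀ i, (u i : Ω) = (vv i : Ω)) ∧ sA.RelMap R u) ∨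
    (∃ u : Fin n → ↥B, (∀ i, (u i : Ω) = (vv i : Ω)) ∧ sB.RelMap R u)

end QSH

/-!
The duplicator's strategy is built by induction on `p` for a game in which the spoiler's
sequence of quantifiers must stay in a set `W` of words closed under subsequences
(`CT.Survives`); `W = f^p_m` covers both the forest `𝓕(f^p_m)` and the sentences whose
quantifier words lie in `f^p_m`.

Survival composes along joins at the root, and along "stars": when the spoiler enters a child
of one tree, the duplicator answers in a child of the other tree that is not yet in use, which
is possible because a play of at most `m` rounds has entered fewer than `m` children before
any of its rounds. In `Ã^{∃q}_m` the only child without an identical partner in `B̃^{∃q}_m` is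
`D^{A,A}`: a move in its `Ã^q` half is answered in a copy of `D^{A,B}` and a move in its
`Ã^{-q}` half in a copy of `D^{B,A}`. From there the duplicator copies moves in the common half
and plays the strategy for `q` in the other one, which suffices because the spoiler has already
spent the leading `∃` of `p`. Prefixes starting with `∀` reduce to this case by exchanging the
two structures together with `∃` and `∀`; for `|p| = 1` the spoiler may only play in the
structure that embeds into the other one.
-/

namespace QSH

open CT
open scoped List

section Words

def SublistClosed (W : Set (List Quant)) : Prop := ∀ ⦃u v⦄, u <+ v → v ∈ W → u ∈ W

def wordsAfter (W : Set (List Quant)) (u : List Quant) : Set (List Quant) := {v | u ++ v ∈ W}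

def dualWords (W : Set (List Quant)) : Set (List Quant) := {u | u.map Quant.dual ∈ W}

def avoiding (p : List Quant) : Set (List Quant) := {u | ¬ p <+ u}

variable {W : Set (List Quant)}

lemma sublistClosed_wordsAfter (hW : SublistClosed W) (u : List Quant) :
    SublistClosed (wordsAfter W u) :=
  fun _ _ hv h => hW (hv.append_left u) h

lemma wordsAfter_subset (hW : SublistClosed W) (u : List Quant) :
    wordsAfter W u ⊆ W :=
  fun v hv => hW (List.sublist_append_right u v) hv

lemma sublistClosed_dualWords (hW : SublistClosed W) : SublistClosed (dualWords W) :=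
  fun _ _ huv hv => hW (huv.map _) hv

lemma wordsAfter_wordsAfter (u v : List Quant) :
    wordsAfter (wordsAfter W u) v = wordsAfter W (u ++ v) := by
  ext w
  simp [wordsAfter]

lemma wordsAfter_nil : wordsAfter W [] = W := rfl

lemma wordsAfter_dualWords (s : Quant) :
    wordsAfter (dualWords W) [s] = dualWords (wordsAfter W [s.dual]) := rfl

@[simp] lemma Quant.dual_dual (s : Quant) : s.dual.dual = s := by
  cases s <;> rfl

lemma sublistClosed_avoiding (p : List Quant) : SublistClosed (avoiding p) :=
  fun _ _ huv hv hp => hv (hp.trans huv)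

lemma wordsAfter_avoiding_cons (s : Quant) (q : List Quant) :
    wordsAfter (avoiding (s :: q)) [s] = avoiding q := by
  ext u
  simp [wordsAfter, avoiding]

lemma dualWords_dualWords (W : Set (List Quant)) : dualWords (dualWords W) = W := by
  ext u
  simp [dualWords, List.map_map, Function.comp_def]

lemma dualWords_avoiding (p : List Quant) :
    dualWords (avoiding p) = avoiding (p.map Quant.dual) := by
  ext u
  simp only [dualWords, avoiding, Set.mem_ofPred_eq, not_iff_not]
  constructor <;> intro h <;> simpa [List.map_map, Function.comp_def] using h.map Quant.dual

lemma not_mem_of_mem_avoiding_singleton {s : Quant} {u : List Quant}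
    (hu : u ∈ avoiding [s]) : s ∉ u :=
  fun hs => hu (List.singleton_sublist.mpr hs)

lemma sublistClosed_fpm (p : List Quant) (m : ℕ) : SublistClosed (fpm p m) :=
  fun _ _ huv hv => ⟨fun hp => hv.1 (hp.trans huv), huv.length_le.trans hv.2⟩

end Words

namespace CT

section Addresses

variable {t : CT} {i : ℕ} {c : Bool × CT}

lemma sub_cons_of_getElem? (hc : t.children[i]? = some c) (x : List ℕ) :
    sub (i :: x) t = sub x c.2 := by
  simp [sub, hc]

lemma sub_cons_of_getElem?_eq_none (hc : t.children[i]? = none) (x : List ℕ) :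
    sub (i :: x) t = none := by
  simp [sub, hc]

lemma blackAt_nil : t.blackAt [] ↔ t.isBlack = true := by
  simp [blackAt, sub]

lemma blackAt_cons (hc : t.children[i]? = some c) (x : List ℕ) :
    t.blackAt (i :: x) ↔ c.2.blackAt x := by
  simp only [blackAt, sub_cons_of_getElem? hc]

lemma edgeC_nil {col : Bool} {y : List ℕ} :
    t.edgeC col [] y ↔ ∃ j d, t.children[j]? = some d ∧ d.1 = col ∧ y = [j] := by
  simp [edgeC, sub]

lemma edgeC_cons (hc : t.children[i]? = some c) {col : Bool} (x y : List ℕ) :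
    t.edgeC col (i :: x) y ↔ ∃ y', y = i :: y' ∧ c.2.edgeC col x y' := by
  simp only [edgeC, sub_cons_of_getElem? hc]
  constructor
  · rintro ⟨j, s, d, hs, hd, hcol, rfl⟩
    exact ⟨x ++ [j], rfl, j, s, d, hs, hd, hcol, rfl⟩
  · rintro ⟨y', rfl, j, s, d, hs, hd, hcol, rfl⟩
    exact ⟨j, s, d, hs, hd, hcol, rfl⟩

lemma edgeC_cons_cons (hc : t.children[i]? = some c) {col : Bool} {j : ℕ} (x y : List ℕ) :
    t.edgeC col (i :: x) (j :: y) ↔ i = j ∧ c.2.edgeC col x y := by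
  rw [edgeC_cons hc]
  constructor
  · rintro ⟨y', h, he⟩
    obtain ⟨rfl, rfl⟩ := List.cons.inj h
    exact ⟨rfl, he⟩
  · rintro ⟨rfl, he⟩
    exact ⟨y, rfl, he⟩

lemma not_edgeC_nil_right {col : Bool} {x : List ℕ} : ¬ t.edgeC col x [] := by
  rintro ⟨_, _, _, _, _, _, h⟩
  simp at h

lemma head_eq_of_edgeC {col : Bool} {j : ℕ} {x y : List ℕ} (h : t.edgeC col (i :: x) (j :: y)) :
    i = j := by
  obtain ⟨_, _, _, _, _, _, h⟩ := h
  exact (List.cons.inj h).1.symm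

lemma isSome_sub_cons {x : List ℕ} (h : (sub (i :: x) t).isSome) :
    ∃ c, t.children[i]? = some c ∧ (sub x c.2).isSome := by
  cases hc : t.children[i]? with
  | none => simp [sub_cons_of_getElem?_eq_none hc] at h
  | some c => exact ⟨c, rfl, by rwa [sub_cons_of_getElem? hc] at h⟩

@[simp] lemma rootNode_val : t.rootNode.1 = [] := rfl

lemma Node.eq_root_iff {x : t.Node} : x = t.rootNode ↔ x.1 = [] :=
  ⟨fun h => h ▸ rfl, fun h => Subtype.ext h⟩

def childNode (hc : t.children[i]? = some c) (x : c.2.Node) : t.Node :=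
  ⟨i :: x.1, by rw [sub_cons_of_getElem? hc]; exact x.2⟩

@[simp] lemma childNode_val (hc : t.children[i]? = some c) (x : c.2.Node) :
    (childNode hc x).1 = i :: x.1 := rfl

lemma childNode_injective (hc : t.children[i]? = some c) : Function.Injective (childNode hc) :=
  fun _ _ h => Subtype.ext (List.cons.inj (congrArg Subtype.val h)).2

lemma Node.eq_root_or_childNode (x : t.Node) :
    x = t.rootNode ∨
      ∃ i c, ∃ hc : t.children[i]? = some c, ∃ y : c.2.Node, x = childNode hc y := by
  obtain ⟨_ | ⟨i, y⟩, hx⟩ := x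
  · exact Or.inl rfl
  · obtain ⟨c, hc, hy⟩ := isSome_sub_cons hx
    exact Or.inr ⟨i, c, hc, ⟨y, hy⟩, rfl⟩

end Addresses

section Embeddings

lemma children_swap (t : CT) :
    t.swap.children = t.children.map fun c => (!c.1, c.2.swap) := by
  cases t with
  | node b cs =>
    rw [swap]
    exact List.attach_map_val (l := cs) (f := fun c => (!c.1, c.2.swap))

lemma isBlack_swap (t : CT) : t.swap.isBlack = t.isBlack := by
  cases t
  rw [swap]
  rfl

lemma sub_swap (x : List ℕ) (t : CT) : sub x t.swap = (sub x t).map swap := by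
  induction x generalizing t with
  | nil => rfl
  | cons i x ih =>
    cases hc : t.children[i]? with
    | none =>
      have : t.swap.children[i]? = none := by simp [children_swap, hc]
      rw [sub_cons_of_getElem?_eq_none this, sub_cons_of_getElem?_eq_none hc]
      rfl
    | some c =>
      have : t.swap.children[i]? = some (!c.1, c.2.swap) := by simp [children_swap, hc]
      rw [sub_cons_of_getElem? this, sub_cons_of_getElem? hc, ih]

lemma blackAt_swap (t : CT) (x : List ℕ) : t.swap.blackAt x ↔ t.blackAt x := by
  simp [blackAt, sub_swap, isBlack_swap]

lemma edgeC_swap (t : CT) (col : Bool) (x y : List ℕ) :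
    t.swap.edgeC col x y ↔ t.edgeC (!col) x y := by
  simp only [edgeC, sub_swap, Option.map_eq_some_iff]
  constructor
  · rintro ⟨j, _, d, ⟨s, hs, rfl⟩, hd, rfl, rfl⟩
    rw [children_swap, List.getElem?_map, Option.map_eq_some_iff] at hd
    obtain ⟨d', hd', rfl⟩ := hd
    exact ⟨j, s, d', hs, hd', by simp, rfl⟩
  · rintro ⟨j, s, d, hs, hd, hcol, rfl⟩
    refine ⟨j, s.swap, (!d.1, d.2.swap), ⟨s, hs, rfl⟩, ?_, by simp [hcol], rfl⟩
    rw [children_swap, List.getElem?_map, hd]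
    rfl

def swapEquiv (t : CT) : t.Node ≃ t.swap.Node where
  toFun x := ⟨x.1, by simpa [sub_swap] using x.2⟩
  invFun x := ⟨x.1, by simpa [sub_swap] using x.2⟩
  left_inv _ := rfl
  right_inv _ := rfl

structure IsEmbedding {s t : CT} (π : Bool → Bool) (e : s.Node → t.Node) : Prop where
  map_root : e s.rootNode = t.rootNode
  injective : Function.Injective e
  blackAt_iff : ∀ x, t.blackAt (e x).1 ↔ s.blackAt x.1
  edgeC_iff : ∀ col x y, t.edgeC col (e x).1 (e y).1 ↔ s.edgeC (π col) x.1 y.1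

lemma isEmbedding_swapEquiv (t : CT) : IsEmbedding (!·) t.swapEquiv where
  map_root := rfl
  injective := t.swapEquiv.injective
  blackAt_iff x := blackAt_swap t x.1
  edgeC_iff col x y := edgeC_swap t col x.1 y.1

def reindexAddr (σ : ℕ → ℕ) : List ℕ → List ℕ
  | [] => []
  | i :: x => σ i :: x

structure Reindexes (σ : ℕ → ℕ) (T T' : CT) : Prop where
  isBlack_eq : T'.isBlack = T.isBlack
  injective : Function.Injective σ
  children_getElem? : ∀ i c, T.children[i]? = some c → T'.children[σ i]? = some c

variable {σ : ℕ → ℕ} {T T' : CT}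

lemma Reindexes.sub_eq (h : Reindexes σ T T') {i : ℕ} {x : List ℕ}
    (hx : (sub (i :: x) T).isSome) : sub (reindexAddr σ (i :: x)) T' = sub (i :: x) T := by
  obtain ⟨c, hc, -⟩ := isSome_sub_cons hx
  rw [reindexAddr, sub_cons_of_getElem? (h.children_getElem? i c hc), sub_cons_of_getElem? hc]

def Reindexes.node (h : Reindexes σ T T') (x : T.Node) : T'.Node :=
  ⟨reindexAddr σ x.1, by
    obtain ⟨_ | ⟨i, x⟩, hx⟩ := x
    · rfl
    · rw [h.sub_eq hx]; exact hx⟩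

@[simp] lemma Reindexes.node_val (h : Reindexes σ T T') (x : T.Node) :
    (h.node x).1 = reindexAddr σ x.1 := rfl

lemma Reindexes.isEmbedding (h : Reindexes σ T T') : IsEmbedding id h.node where
  map_root := rfl
  injective := by
    rintro ⟨_ | ⟨i, x⟩, hx⟩ ⟨_ | ⟨j, y⟩, hy⟩ hxy <;>
      simp only [Subtype.ext_iff, Reindexes.node_val, reindexAddr, reduceCtorEq,
        List.cons.injEq] at hxy
    · rfl
    · obtain ⟨hij, rfl⟩ := hxy
      obtain rfl := h.injective hij
      rfl
  blackAt_iff := by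
    rintro ⟨_ | ⟨i, x⟩, hx⟩
    · simp [blackAt_nil, h.isBlack_eq, reindexAddr]
    · simp only [blackAt, Reindexes.node_val, h.sub_eq hx]
  edgeC_iff := by
    rintro col ⟨x, hx⟩ ⟨y, hy⟩
    simp only [Reindexes.node_val, id]
    rcases x with _ | ⟨i, x⟩
    · rcases y with _ | ⟨j, y⟩
      · simp [reindexAddr, not_edgeC_nil_right]
      · obtain ⟨c, hc, -⟩ := isSome_sub_cons hy
        rw [reindexAddr, edgeC_nil, edgeC_nil]
        constructor
        · rintro ⟨k, d, hd, hcol, hk⟩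
          obtain ⟨rfl, rfl⟩ := List.cons.inj hk
          rw [h.children_getElem? j c hc, Option.some.injEq] at hd
          exact ⟨j, c, hc, hd ▸ hcol, rfl⟩
        · rintro ⟨k, d, hd, hcol, hk⟩
          obtain ⟨rfl, rfl⟩ := List.cons.inj hk
          exact ⟨σ j, d, h.children_getElem? j d hd, hcol, rfl⟩
    · obtain ⟨c, hc, -⟩ := isSome_sub_cons hx
      rw [reindexAddr, edgeC_cons (h.children_getElem? i c hc), edgeC_cons hc]
      rcases y with _ | ⟨j, y⟩
      · simp [reindexAddr]
      · simp only [reindexAddr, List.cons.injEq, h.injective.eq_iff]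

lemma starT_getElem? (kb kw i : ℕ) :
    (starT kb kw).children[i]? =
      if i < kb then some (true, node true [])
      else if i < kb + kw then some (true, node false []) else none := by
  simp only [starT, children, List.getElem?_append, List.length_replicate,
    List.getElem?_replicate]
  split_ifs <;> first | rfl | omega

lemma reindexes_starT {kb kw kb' kw' : ℕ} (hb : kb ≤ kb') (hw : kw ≤ kw') :
    Reindexes (fun i => if i < kb then i else i + (kb' - kb)) (starT kb kw) (starT kb' kw') where
  isBlack_eq := rfl
  injective i j h := by
    simp only at h
    split_ifs at h <;> omega
  children_getElem? i c hc := by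
    rw [starT_getElem?] at hc ⊢
    split_ifs at hc ⊢ <;> first | exact hc | omega

end Embeddings

section Joins

lemma children_joinRoots (X Y : CT) : (X.joinRoots Y).children = X.children ++ Y.children := by
  cases X; cases Y; rfl

lemma isBlack_joinRoots (X Y : CT) : (X.joinRoots Y).isBlack = X.isBlack := by
  cases X; cases Y; rfl

lemma reindexes_joinLeft (X Y : CT) : Reindexes id X (X.joinRoots Y) where
  isBlack_eq := isBlack_joinRoots X Y
  injective := Function.injective_id
  children_getElem? i c hc := by
    rw [children_joinRoots]
    exact (List.getElem?_append_left (List.getElem?_eq_some_iff.mp hc).1).trans hc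

lemma reindexes_joinRight {X Y : CT} (hb : Y.isBlack = X.isBlack) :
    Reindexes (X.children.length + ·) Y (X.joinRoots Y) where
  isBlack_eq := (isBlack_joinRoots X Y).trans hb.symm
  injective := add_right_injective _
  children_getElem? i c hc := by
    rw [children_joinRoots, List.getElem?_append_right (by omega)]
    simpa using hc

variable {X Y : CT} (hb : Y.isBlack = X.isBlack)

def joinLeft (X Y : CT) : X.Node → (X.joinRoots Y).Node := (reindexes_joinLeft X Y).node

def joinRight : Y.Node → (X.joinRoots Y).Node := (reindexes_joinRight hb).node

lemma isEmbedding_joinLeft (X Y : CT) : IsEmbedding id (joinLeft X Y) :=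
  (reindexes_joinLeft X Y).isEmbedding

lemma isEmbedding_joinRight : IsEmbedding id (joinRight hb) :=
  (reindexes_joinRight hb).isEmbedding

lemma head_lt_length {t : CT} {x : t.Node} {i : ℕ} {r : List ℕ} (hx : x.1 = i :: r) :
    i < t.children.length := by
  obtain ⟨c, hc, -⟩ := isSome_sub_cons (hx ▸ x.2)
  exact (List.getElem?_eq_some_iff.mp hc).1

lemma joinLeft_eq_joinRight_iff (x : X.Node) (y : Y.Node) :
    joinLeft X Y x = joinRight hb y ↔ x = X.rootNode ∧ y = Y.rootNode := by
  constructor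
  · intro h
    have h' := congrArg Subtype.val h
    obtain ⟨_ | ⟨i, x'⟩, hx⟩ := x <;> obtain ⟨_ | ⟨j, y'⟩, hy⟩ := y <;>
      simp only [joinLeft, joinRight, Reindexes.node_val, reindexAddr, reduceCtorEq,
        List.cons.injEq, id] at h'
    · exact ⟨rfl, rfl⟩
    · have := head_lt_length (x := ⟨i :: x', hx⟩) rfl
      omega
  · rintro ⟨rfl, rfl⟩
    rfl

lemma edgeC_joinLeft_joinRight {col : Bool} (x : X.Node) (y : Y.Node) :
    (X.joinRoots Y).edgeC col (joinLeft X Y x).1 (joinRight hb y).1 ↔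
      x = X.rootNode ∧ Y.edgeC col [] y.1 := by
  by_cases hx : x = X.rootNode
  · subst hx
    rw [show joinLeft X Y X.rootNode = joinRight hb Y.rootNode from rfl,
      (isEmbedding_joinRight hb).edgeC_iff]
    simp [rootNode]
  · simp only [hx, false_and, iff_false]
    obtain ⟨_ | ⟨i, r⟩, hxv⟩ := x
    · exact (hx rfl).elim
    · have hi := head_lt_length (x := ⟨i :: r, hxv⟩) rfl
      obtain ⟨_ | ⟨j, r'⟩, hy⟩ := y
      · exact not_edgeC_nil_right
      · intro h
        have := head_eq_of_edgeC h
        simp only [id] at this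
        omega

lemma edgeC_joinRight_joinLeft {col : Bool} (y : Y.Node) (x : X.Node) :
    (X.joinRoots Y).edgeC col (joinRight hb y).1 (joinLeft X Y x).1 ↔
      y = Y.rootNode ∧ X.edgeC col [] x.1 := by
  by_cases hy : y = Y.rootNode
  · subst hy
    rw [show joinRight hb Y.rootNode = joinLeft X Y X.rootNode from rfl,
      (isEmbedding_joinLeft X Y).edgeC_iff]
    simp [rootNode]
  · simp only [hy, false_and, iff_false]
    obtain ⟨_ | ⟨j, r'⟩, hyv⟩ := y
    · exact (hy rfl).elim
    · obtain ⟨_ | ⟨i, r⟩, hx⟩ := x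
      · exact not_edgeC_nil_right
      · have hi := head_lt_length (x := ⟨i :: r, hx⟩) rfl
        intro h
        have := head_eq_of_edgeC h
        simp only [id] at this
        omega

lemma joinRoots_node_cases (z : (X.joinRoots Y).Node) :
    (∃ x, z = joinLeft X Y x) ∨ ∃ y, z = joinRight hb y := by
  obtain ⟨_ | ⟨i, r⟩, hz⟩ := z
  · exact Or.inl ⟨X.rootNode, rfl⟩
  · obtain ⟨c, hc, hr⟩ := isSome_sub_cons hz
    rw [children_joinRoots, List.getElem?_append] at hc
    split_ifs at hc with hi
    · refine Or.inl ⟨⟨i :: r, ?_⟩, rfl⟩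
      rwa [sub_cons_of_getElem? hc]
    · refine Or.inr ⟨⟨(i - X.children.length) :: r, ?_⟩, ?_⟩
      · rwa [sub_cons_of_getElem? hc]
      · simp only [joinRight, Subtype.ext_iff, Reindexes.node_val, reindexAddr]
        congr 1
        omega

end Joins

section PartialIsos

/-- The pair of roots, which interpret the constant `r`, is always part of the position. -/
def PartialIso (s t : CT) (R : Set (s.Node × t.Node)) : Prop :=
  ∀ x ∈ insert (s.rootNode, t.rootNode) R, ∀ y ∈ insert (s.rootNode, t.rootNode) R,
    (x.1 = y.1 ↔ x.2 = y.2) ∧ (s.blackAt x.1.1 ↔ t.blackAt x.2.1) ∧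
      ∀ col, s.edgeC col x.1.1 y.1.1 ↔ t.edgeC col x.2.1 y.2.1

variable {s t : CT} {R R' : Set (s.Node × t.Node)}

lemma PartialIso.mono (h : PartialIso s t R) (hR : R' ⊆ insert (s.rootNode, t.rootNode) R) :
    PartialIso s t R' := by
  have hR' : insert (s.rootNode, t.rootNode) R' ⊆ insert (s.rootNode, t.rootNode) R :=
    Set.insert_subset (Set.mem_insert _ _) hR
  exact fun x hx y hy => h x (hR' hx) y (hR' hy)

lemma PartialIso.eq_root_iff (h : PartialIso s t R) {z : s.Node × t.Node}
    (hz : z ∈ insert (s.rootNode, t.rootNode) R) : z.1 = s.rootNode ↔ z.2 = t.rootNode :=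
  (h z hz _ (Set.mem_insert _ _)).1

lemma PartialIso.edgeC_root_iff (h : PartialIso s t R) {z : s.Node × t.Node}
    (hz : z ∈ insert (s.rootNode, t.rootNode) R) (col : Bool) :
    s.edgeC col [] z.1.1 ↔ t.edgeC col [] z.2.1 :=
  (h _ (Set.mem_insert _ _) z hz).2.2 col

lemma partialIso_of_isEmbedding {e : s.Node → t.Node} (he : IsEmbedding id e)
    (hR : ∀ z ∈ R, z.2 = e z.1) : PartialIso s t R := by
  have hR' : ∀ z ∈ insert (s.rootNode, t.rootNode) R, z.2 = e z.1 := by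
    rintro z (rfl | hz)
    · exact he.map_root.symm
    · exact hR z hz
  intro x hx y hy
  rw [hR' x hx, hR' y hy, he.injective.eq_iff, he.blackAt_iff]
  exact ⟨Iff.rfl, Iff.rfl, fun col => (he.edgeC_iff col _ _).symm⟩

lemma isEmbedding_id (t : CT) : IsEmbedding id (id : t.Node → t.Node) :=
  ⟨rfl, Function.injective_id, fun _ => Iff.rfl, fun _ _ _ => Iff.rfl⟩

lemma partialIso_diag {R : Set (t.Node × t.Node)} (hR : ∀ z ∈ R, z.1 = z.2) :
    PartialIso t t R :=
  partialIso_of_isEmbedding (isEmbedding_id t) fun z hz => (hR z hz).symm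

lemma mem_insert_image_prodMap_iff {α β γ δ : Type*} {f : α → γ} {g : β → δ} {a : α}
    {b : β} {R : Set (α × β)} {z : γ × δ} :
    z ∈ insert (f a, g b) (Prod.map f g '' R) ↔
      ∃ w ∈ insert (a, b) R, Prod.map f g w = z := by
  rw [show (f a, g b) = Prod.map f g (a, b) from rfl, ← Set.image_insert_eq]
  rfl

lemma PartialIso.image {S T : CT} {π : Bool → Bool} {e : s.Node → S.Node}
    {e' : t.Node → T.Node}
    (he : IsEmbedding π e) (he' : IsEmbedding π e') (h : PartialIso s t R) :
    PartialIso S T (Prod.map e e' '' R) := by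
  intro x' hx' y' hy'
  rw [← he.map_root, ← he'.map_root] at hx' hy'
  obtain ⟨x, hx, rfl⟩ := mem_insert_image_prodMap_iff.mp hx'
  obtain ⟨y, hy, rfl⟩ := mem_insert_image_prodMap_iff.mp hy'
  obtain ⟨heq, hbl, hed⟩ := h x hx y hy
  simp only [Prod.map_fst, Prod.map_snd, he.injective.eq_iff, he'.injective.eq_iff,
    he.blackAt_iff, he'.blackAt_iff, he.edgeC_iff, he'.edgeC_iff]
  exact ⟨heq, hbl, fun col => hed (π col)⟩

lemma PartialIso.flip (h : PartialIso s t R) : PartialIso t s (Prod.swap ⁻¹' R) := by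
  have hmem : ∀ z ∈ insert (t.rootNode, s.rootNode) (Prod.swap ⁻¹' R),
      z.swap ∈ insert (s.rootNode, t.rootNode) R := by
    rintro z (rfl | hz)
    · exact Set.mem_insert _ _
    · exact Set.mem_insert_of_mem _ hz
  intro x hx y hy
  obtain ⟨heq, hbl, hed⟩ := h _ (hmem x hx) _ (hmem y hy)
  exact ⟨heq.symm, hbl.symm, fun col => (hed col).symm⟩

lemma pIso_of_partialIso {n : ℕ} {v : Fin n → s.Node × t.Node}
    (H : PartialIso s t (Set.range v)) :
    PIso s.Str t.Str (fun i => (v i).1) (fun i => (v i).2) := by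
  have key : ∀ tm : tauPlus.Term (Fin n), ∃ z ∈ insert (s.rootNode, t.rootNode) (Set.range v),
      TermRealize s.Str (fun i => (v i).1) tm = z.1 ∧
        TermRealize t.Str (fun i => (v i).2) tm = z.2 := by
    rintro (i | ⟨⟨⟩, _⟩)
    · exact ⟨v i, Set.mem_insert_of_mem _ ⟨i, rfl⟩, rfl, rfl⟩
    · exact ⟨_, Set.mem_insert _ _, rfl, rfl⟩
  refine ⟨fun t₁ t₂ => ?_, fun _ Rl ts => ?_⟩
  · obtain ⟨z, hz, hz₁, hz₂⟩ := key t₁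
    obtain ⟨w, hw, hw₁, hw₂⟩ := key t₂
    rw [hz₁, hz₂, hw₁, hw₂]
    exact (H z hz w hw).1
  · cases Rl with
    | U =>
      obtain ⟨z, hz, hz₁, hz₂⟩ := key (ts 0)
      change s.blackAt (TermRealize s.Str _ (ts 0)).1 ↔ t.blackAt (TermRealize t.Str _ (ts 0)).1
      rw [hz₁, hz₂]
      exact (H z hz z hz).2.1
    | R | B =>
      obtain ⟨z, hz, hz₁, hz₂⟩ := key (ts 0)
      obtain ⟨w, hw, hw₁, hw₂⟩ := key (ts 1)
      change s.edgeC _ (TermRealize s.Str _ (ts 0)).1 (TermRealize s.Str _ (ts 1)).1 ↔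
        t.edgeC _ (TermRealize t.Str _ (ts 0)).1 (TermRealize t.Str _ (ts 1)).1
      rw [hz₁, hz₂, hw₁, hw₂]
      exact (H z hz w hw).2.2 _

lemma histOK_of_partialIso {h : List (s.Node × t.Node)} (H : PartialIso s t {z | z ∈ h}) :
    HistOK s.Str t.Str h :=
  pIso_of_partialIso (v := h.get) (by simpa [Set.range, List.mem_iff_get] using H)

end PartialIsos

section PartialIsoJoin

variable {X X' Y Y' : CT} (hb : Y.isBlack = X.isBlack) (hb' : Y'.isBlack = X'.isBlack)
  {Rx : Set (X.Node × X'.Node)} {Ry : Set (Y.Node × Y'.Node)}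

def joinPos (Rx : Set (X.Node × X'.Node)) (Ry : Set (Y.Node × Y'.Node)) :
    Set ((X.joinRoots Y).Node × (X'.joinRoots Y').Node) :=
  Prod.map (joinLeft X Y) (joinLeft X' Y') '' Rx ∪ Prod.map (joinRight hb) (joinRight hb') '' Ry

lemma insert_joinPos_left (x : X.Node) (x' : X'.Node) :
    insert (joinLeft X Y x, joinLeft X' Y' x') (joinPos hb hb' Rx Ry) =
      joinPos hb hb' (insert (x, x') Rx) Ry := by
  rw [joinPos, joinPos, Set.image_insert_eq, Set.insert_union]
  rfl

lemma insert_joinPos_right (y : Y.Node) (y' : Y'.Node) :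
    insert (joinRight hb y, joinRight hb' y') (joinPos hb hb' Rx Ry) =
      joinPos hb hb' Rx (insert (y, y') Ry) := by
  rw [joinPos, joinPos, Set.image_insert_eq, Set.union_insert]
  rfl

lemma PartialIso.joinRoots (hX : PartialIso X X' Rx) (hY : PartialIso Y Y' Ry) :
    PartialIso (X.joinRoots Y) (X'.joinRoots Y') (joinPos hb hb' Rx Ry) := by
  have hL := hX.image (isEmbedding_joinLeft X Y) (isEmbedding_joinLeft X' Y')
  have hR := hY.image (isEmbedding_joinRight hb) (isEmbedding_joinRight hb')
  have cross : ∀ x ∈ insert (X.rootNode, X'.rootNode) Rx,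
      ∀ y ∈ insert (Y.rootNode, Y'.rootNode) Ry,
      (joinLeft X Y x.1 = joinRight hb y.1 ↔ joinLeft X' Y' x.2 = joinRight hb' y.2) ∧
      ∀ col,
        ((X.joinRoots Y).edgeC col (joinLeft X Y x.1).1 (joinRight hb y.1).1 ↔
          (X'.joinRoots Y').edgeC col (joinLeft X' Y' x.2).1 (joinRight hb' y.2).1) ∧
        ((X.joinRoots Y).edgeC col (joinRight hb y.1).1 (joinLeft X Y x.1).1 ↔
          (X'.joinRoots Y').edgeC col (joinRight hb' y.2).1 (joinLeft X' Y' x.2).1) := by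
    intro x hx y hy
    simp [joinLeft_eq_joinRight_iff, edgeC_joinLeft_joinRight, edgeC_joinRight_joinLeft,
      hX.eq_root_iff hx, hY.eq_root_iff hy, hX.edgeC_root_iff hx, hY.edgeC_root_iff hy]
  have hcls : ∀ z ∈ insert ((X.joinRoots Y).rootNode, (X'.joinRoots Y').rootNode)
      (joinPos hb hb' Rx Ry),
      z ∈ insert (joinLeft X Y X.rootNode, joinLeft X' Y' X'.rootNode)
          (Prod.map (joinLeft X Y) (joinLeft X' Y') '' Rx) ∨
        z ∈ insert (joinRight hb Y.rootNode, joinRight hb' Y'.rootNode)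
          (Prod.map (joinRight hb) (joinRight hb') '' Ry) := by
    rintro z (rfl | hz | hz)
    exacts [Or.inl (Set.mem_insert _ _), Or.inl (Set.mem_insert_of_mem _ hz),
      Or.inr (Set.mem_insert_of_mem _ hz)]
  intro z hz w hw
  rcases hcls z hz with hz | hz <;> rcases hcls w hw with hw | hw
  · exact hL z hz w hw
  · refine ⟨?_, (hL z hz z hz).2.1, fun col => ?_⟩ <;>
      obtain ⟨x, hx, rfl⟩ := mem_insert_image_prodMap_iff.mp hz <;>
      obtain ⟨y, hy, rfl⟩ := mem_insert_image_prodMap_iff.mp hw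
    exacts [(cross x hx y hy).1, ((cross x hx y hy).2 col).1]
  · refine ⟨?_, (hR z hz z hz).2.1, fun col => ?_⟩ <;>
      obtain ⟨y, hy, rfl⟩ := mem_insert_image_prodMap_iff.mp hz <;>
      obtain ⟨x, hx, rfl⟩ := mem_insert_image_prodMap_iff.mp hw
    · simp only [Prod.map_fst, Prod.map_snd, eq_comm (a := joinRight _ _)]
      exact (cross x hx y hy).1
    · exact ((cross x hx y hy).2 col).2
  · exact hR z hz w hw

end PartialIsoJoin

section Children

variable {t : CT} {i : ℕ} {c : Bool × CT} (hc : t.children[i]? = some c)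
include hc

lemma childNode_ne_root (x : c.2.Node) : childNode hc x ≠ t.rootNode := by
  simp [Node.eq_root_iff]

lemma blackAt_childNode (x : c.2.Node) : t.blackAt (childNode hc x).1 ↔ c.2.blackAt x.1 :=
  blackAt_cons hc x.1

lemma edgeC_root_childNode {col : Bool} (x : c.2.Node) :
    t.edgeC col [] (childNode hc x).1 ↔ x = c.2.rootNode ∧ c.1 = col := by
  rw [childNode_val, edgeC_nil, Node.eq_root_iff]
  constructor
  · rintro ⟨j, d, hd, rfl, h⟩
    obtain ⟨rfl, hx⟩ := List.cons.inj h
    rw [hc, Option.some.injEq] at hd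
    exact ⟨hx, hd ▸ rfl⟩
  · rintro ⟨hx, rfl⟩
    exact ⟨i, c, hc, rfl, by rw [hx]⟩

lemma edgeC_childNode_childNode {col : Bool} (x y : c.2.Node) :
    t.edgeC col (childNode hc x).1 (childNode hc y).1 ↔ c.2.edgeC col x.1 y.1 := by
  simp [edgeC_cons_cons hc]

end Children

section Survival

/-- The duplicator can survive `k` more rounds of the game on `s` and `t` from the position
`R` (the pairs picked so far), when the spoiler may only play the words of `W` as his
sequence of quantifiers. -/
def Survives (s t : CT) : Set (List Quant) → ℕ → Set (s.Node × t.Node) → Prop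
  | _, 0, R => PartialIso s t R
  | W, k + 1, R => PartialIso s t R ∧
      ([.ex] ∈ W → ∀ a, ∃ b, Survives s t (wordsAfter W [.ex]) k (insert (a, b) R)) ∧
      ([.fa] ∈ W → ∀ b, ∃ a, Survives s t (wordsAfter W [.fa]) k (insert (a, b) R))

variable {s t : CT} {W V : Set (List Quant)} {k : ℕ} {R : Set (s.Node × t.Node)}

lemma Survives.partialIso (h : Survives s t W k R) : PartialIso s t R := by
  cases k with
  | zero => exact h
  | succ k => exact h.1

lemma Survives.mono (h : Survives s t W k R) {k' : ℕ} {R' : Set (s.Node × t.Node)}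
    (hV : V ⊆ W) (hk : k' ≤ k) (hR : R' ⊆ insert (s.rootNode, t.rootNode) R) :
    Survives s t V k' R' := by
  induction k' generalizing k V W R R' with
  | zero => exact h.partialIso.mono hR
  | succ k' ih =>
    obtain ⟨k, rfl⟩ : ∃ j, k = j + 1 := ⟨k - 1, by omega⟩
    have hins : ∀ z, insert z R' ⊆ insert (s.rootNode, t.rootNode) (insert z R) :=
      fun z => (Set.insert_subset_insert hR).trans (Set.insert_comm _ _ _).subset
    refine ⟨h.partialIso.mono hR, fun hex a => ?_, fun hfa b => ?_⟩
    · obtain ⟨b, hb⟩ := h.2.1 (hV hex) a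
      exact ⟨b, ih hb (fun _ hu => hV hu) (by omega) (hins _)⟩
    · obtain ⟨a, ha⟩ := h.2.2 (hV hfa) b
      exact ⟨a, ih ha (fun _ hu => hV hu) (by omega) (hins _)⟩

lemma preimage_swap_insert {α β : Type*} (a : α) (b : β) (R : Set (α × β)) :
    Prod.swap ⁻¹' insert (a, b) R = insert (b, a) (Prod.swap ⁻¹' R) := by
  ext ⟨x, y⟩
  simp [and_comm]

lemma preimage_swap_singleton {α β : Type*} (a : α) (b : β) :
    Prod.swap ⁻¹' {(a, b)} = {(b, a)} := by
  ext ⟨x, y⟩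
  simp [and_comm]

lemma Survives.flip (h : Survives s t W k R) :
    Survives t s (dualWords W) k (Prod.swap ⁻¹' R) := by
  induction k generalizing W R with
  | zero => exact PartialIso.flip h
  | succ k ih =>
    refine ⟨h.partialIso.flip, fun hex b => ?_, fun hfa a => ?_⟩
    · obtain ⟨a, ha⟩ := h.2.2 hex b
      exact ⟨a, preimage_swap_insert a b R ▸ ih ha⟩
    · obtain ⟨b, hb⟩ := h.2.1 hfa a
      exact ⟨b, preimage_swap_insert a b R ▸ ih hb⟩

lemma survives_flip_iff :
    Survives t s (dualWords W) k (Prod.swap ⁻¹' R) ↔ Survives s t W k R := by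
  refine ⟨fun h => ?_, Survives.flip⟩
  simpa [dualWords_dualWords, Set.preimage_preimage] using h.flip

lemma survives_diag {R : Set (t.Node × t.Node)} (hR : ∀ z ∈ R, z.1 = z.2) :
    Survives t t W k R := by
  induction k generalizing W R with
  | zero => exact partialIso_diag hR
  | succ k ih =>
    have hins : ∀ a : t.Node, ∀ z ∈ insert (a, a) R, z.1 = z.2 := by
      rintro a z (rfl | hz)
      exacts [rfl, hR z hz]
    exact ⟨partialIso_diag hR, fun _ a => ⟨a, ih (hins a)⟩, fun _ a => ⟨a, ih (hins a)⟩⟩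

lemma Survives.image_equiv {S T : CT} {π : Bool → Bool} {e : s.Node ≃ S.Node}
    {e' : t.Node ≃ T.Node} (he : IsEmbedding π e) (he' : IsEmbedding π e')
    (h : Survives s t W k R) : Survives S T W k (Prod.map e e' '' R) := by
  induction k generalizing W R with
  | zero => exact PartialIso.image he he' h
  | succ k ih =>
    refine ⟨PartialIso.image he he' h.partialIso, fun hex a => ?_, fun hfa b => ?_⟩
    · obtain ⟨b, hb⟩ := h.2.1 hex (e.symm a)
      refine ⟨e' b, ?_⟩
      simpa [Set.image_insert_eq] using ih hb
    · obtain ⟨a, ha⟩ := h.2.2 hfa (e'.symm b)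
      refine ⟨e a, ?_⟩
      simpa [Set.image_insert_eq] using ih ha

lemma Survives.swap (h : Survives s t W k R) :
    Survives s.swap t.swap W k (Prod.map s.swapEquiv t.swapEquiv '' R) :=
  h.image_equiv (isEmbedding_swapEquiv s) (isEmbedding_swapEquiv t)

lemma survives_of_isEmbedding {e : s.Node → t.Node} (he : IsEmbedding id e)
    (hW : ∀ u ∈ W, .fa ∉ u) (hR : ∀ z ∈ R, z.2 = e z.1) : Survives s t W k R := by
  induction k generalizing W R with
  | zero => exact partialIso_of_isEmbedding he hR
  | succ k ih =>
    refine ⟨partialIso_of_isEmbedding he hR, fun _ a => ⟨e a, ih ?_ ?_⟩, fun hfa => ?_⟩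
    · exact fun u hu hfa => hW _ hu (List.mem_cons_of_mem _ hfa)
    · rintro z (rfl | hz)
      exacts [rfl, hR z hz]
    · exact (hW _ hfa (List.mem_singleton_self _)).elim

lemma Survives.of_length_le (h : Survives s t W k R)
    (hW : ∀ u ∈ W, u.length ≤ k) (k' : ℕ) : Survives s t W k' R := by
  induction k' generalizing W k R with
  | zero => exact h.partialIso
  | succ k' ih =>
    have hmove : ∀ q, [q] ∈ W → ∃ k₀, k = k₀ + 1 :=
      fun q hq => ⟨k - 1, by have := hW _ hq; simp at this; omega⟩
    refine ⟨h.partialIso, fun hex a => ?_, fun hfa b => ?_⟩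
    · obtain ⟨k₀, rfl⟩ := hmove _ hex
      obtain ⟨b, hb⟩ := h.2.1 hex a
      exact ⟨b, ih hb fun u hu => by simpa using hW _ hu⟩
    · obtain ⟨k₀, rfl⟩ := hmove _ hfa
      obtain ⟨a, ha⟩ := h.2.2 hfa b
      exact ⟨a, ih ha fun u hu => by simpa using hW _ hu⟩

end Survival

section SurvivalJoin

variable {X X' Y Y' : CT} (hb : Y.isBlack = X.isBlack) (hb' : Y'.isBlack = X'.isBlack)
  {W : Set (List Quant)} {k : ℕ}

lemma Survives.joinRoots (hW : SublistClosed W) {Rx : Set (X.Node × X'.Node)}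
    {Ry : Set (Y.Node × Y'.Node)} (hX : Survives X X' W k Rx) (hY : Survives Y Y' W k Ry) :
    Survives (X.joinRoots Y) (X'.joinRoots Y') W k (joinPos hb hb' Rx Ry) := by
  induction k generalizing W Rx Ry with
  | zero => exact PartialIso.joinRoots hb hb' hX hY
  | succ k ih =>
    have hL := insert_joinPos_left hb hb' (Rx := Rx) (Ry := Ry)
    have hR := insert_joinPos_right hb hb' (Rx := Rx) (Ry := Ry)
    have hW' := fun q => sublistClosed_wordsAfter hW [q]
    have hsub := fun q => wordsAfter_subset hW [q]
    refine ⟨PartialIso.joinRoots hb hb' hX.partialIso hY.partialIso, fun hex a => ?_,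
      fun hfa a' => ?_⟩
    · rcases joinRoots_node_cases hb a with ⟨x, rfl⟩ | ⟨y, rfl⟩
      · obtain ⟨x', hx'⟩ := hX.2.1 hex x
        exact ⟨joinLeft X' Y' x',
          hL x x' ▸ ih (hW' _) hx' (hY.mono (hsub _) k.le_succ (Set.subset_insert _ _))⟩
      · obtain ⟨y', hy'⟩ := hY.2.1 hex y
        exact ⟨joinRight hb' y',
          hR y y' ▸ ih (hW' _) (hX.mono (hsub _) k.le_succ (Set.subset_insert _ _)) hy'⟩
    · rcases joinRoots_node_cases hb' a' with ⟨x', rfl⟩ | ⟨y', rfl⟩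
      · obtain ⟨x, hx⟩ := hX.2.2 hfa x'
        exact ⟨joinLeft X Y x,
          hL x x' ▸ ih (hW' _) hx (hY.mono (hsub _) k.le_succ (Set.subset_insert _ _))⟩
      · obtain ⟨y, hy⟩ := hY.2.2 hfa y'
        exact ⟨joinRight hb y,
          hR y y' ▸ ih (hW' _) (hX.mono (hsub _) k.le_succ (Set.subset_insert _ _)) hy⟩

end SurvivalJoin

section Stars

structure ChildPair (T T' : CT) where
  i : ℕ
  j : ℕ
  c : Bool × CT
  c' : Bool × CT
  hc : T.children[i]? = some c
  hc' : T'.children[j]? = some c'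

namespace ChildPair

variable {T T' : CT} (d e : ChildPair T T') {R : Set (T.Node × T'.Node)}

def embed : d.c.2.Node × d.c'.2.Node → T.Node × T'.Node :=
  Prod.map (childNode d.hc) (childNode d.hc')

def restrict (R : Set (T.Node × T'.Node)) : Set (d.c.2.Node × d.c'.2.Node) := d.embed ⁻¹' R

def flip : ChildPair T' T := ⟨d.j, d.i, d.c', d.c, d.hc', d.hc⟩

lemma restrict_flip : d.flip.restrict (Prod.swap ⁻¹' R) = Prod.swap ⁻¹' d.restrict R := rfl

lemma embed_injective : Function.Injective d.embed :=
  (childNode_injective d.hc).prodMap (childNode_injective d.hc')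

lemma i_eq_of_embed_eq {w : d.c.2.Node × d.c'.2.Node} {v : e.c.2.Node × e.c'.2.Node}
    (h : d.embed w = e.embed v) : d.i = e.i :=
  (List.cons.inj (congrArg (fun z => z.1.1) h)).1

lemma embed_ne_root (w : d.c.2.Node × d.c'.2.Node) : d.embed w ≠ (T.rootNode, T'.rootNode) :=
  fun h => childNode_ne_root d.hc _ (congrArg Prod.fst h)

lemma restrict_insert_root : d.restrict (insert (T.rootNode, T'.rootNode) R) = d.restrict R := by
  ext w
  simp [restrict, d.embed_ne_root w]

lemma restrict_insert_embed_self (w : d.c.2.Node × d.c'.2.Node) :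
    d.restrict (insert (d.embed w) R) = insert w (d.restrict R) := by
  ext v
  simp [restrict, d.embed_injective.eq_iff]

lemma restrict_insert_embed_of_ne {d e : ChildPair T T'} (hde : d.i ≠ e.i)
    (w : d.c.2.Node × d.c'.2.Node) : e.restrict (insert (d.embed w) R) = e.restrict R := by
  ext v
  simp only [restrict, Set.mem_preimage, Set.mem_insert_iff, or_iff_right_iff_imp]
  exact fun h => (hde (e.i_eq_of_embed_eq d h).symm).elim

def Covers (μ : List (ChildPair T T')) (R : Set (T.Node × T'.Node)) : Prop :=
  (μ.map (·.i)).Nodup ∧ (μ.map (·.j)).Nodup ∧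
    ∀ z ∈ R, z = (T.rootNode, T'.rootNode) ∨ ∃ d ∈ μ, ∃ w, z = d.embed w

lemma Covers.flip {μ : List (ChildPair T T')} (h : Covers μ R) :
    Covers (μ.map ChildPair.flip) (Prod.swap ⁻¹' R) := by
  obtain ⟨hi, hj, hcov⟩ := h
  refine ⟨by simpa [List.map_map, Function.comp_def, ChildPair.flip] using hj,
    by simpa [List.map_map, Function.comp_def, ChildPair.flip] using hi, fun z hz => ?_⟩
  rcases hcov z.swap hz with h | ⟨d, hd, w, h⟩
  · exact Or.inl (by rw [← Prod.swap_swap z, h]; rfl)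
  · exact Or.inr ⟨d.flip, List.mem_map_of_mem hd, w.swap, by rw [← Prod.swap_swap z, h]; rfl⟩

lemma Covers.eq_of_i_eq {μ : List (ChildPair T T')} (h : Covers μ R) {d e : ChildPair T T'}
    (hd : d ∈ μ) (he : e ∈ μ) (hde : d.i = e.i) : d = e :=
  List.inj_on_of_nodup_map h.1 hd he hde

variable {μ : List (ChildPair T T')}

lemma Covers.insert_root (h : Covers μ R) : Covers μ (insert (T.rootNode, T'.rootNode) R) := by
  refine ⟨h.1, h.2.1, ?_⟩
  rintro z (rfl | hz)
  exacts [Or.inl rfl, h.2.2 z hz]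

lemma Covers.insert_embed (h : Covers μ R) {d : ChildPair T T'} (hd : d ∈ μ)
    (w : d.c.2.Node × d.c'.2.Node) : Covers μ (insert (d.embed w) R) := by
  refine ⟨h.1, h.2.1, ?_⟩
  rintro z (rfl | hz)
  exacts [Or.inr ⟨d, hd, w, rfl⟩, h.2.2 z hz]

lemma Covers.mem_insert_root (h : Covers μ R) {z : T.Node × T'.Node}
    (hz : z ∈ insert (T.rootNode, T'.rootNode) R) : z = (T.rootNode, T'.rootNode) ∨
      ∃ d ∈ μ, ∃ w ∈ insert (d.c.2.rootNode, d.c'.2.rootNode) (d.restrict R),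
        z = d.embed w := by
  rcases hz with rfl | hz
  · exact Or.inl rfl
  · rcases h.2.2 z hz with rfl | ⟨d, hd, w, rfl⟩
    · exact Or.inl rfl
    · exact Or.inr ⟨d, hd, w, Set.mem_insert_of_mem _ hz, rfl⟩

lemma Covers.restrict_eq_empty (h : Covers μ R) {d : ChildPair T T'} (hd : d.i ∉ μ.map (·.i)) :
    d.restrict R = ∅ := by
  refine Set.eq_empty_of_forall_notMem fun w hw => ?_
  rcases h.2.2 _ hw with h | ⟨e, he, v, h⟩
  · exact d.embed_ne_root w h
  · exact hd (List.mem_map.mpr ⟨e, he, (d.i_eq_of_embed_eq e h).symm⟩)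

lemma Covers.restrict_insert_embed {d : ChildPair T T'} {w : d.c.2.Node × d.c'.2.Node}
    (h : Covers μ (insert (d.embed w) R)) (hd : d ∈ μ) {e : ChildPair T T'} (he : e ∈ μ)
    (hed : e ≠ d) : e.restrict (insert (d.embed w) R) = e.restrict R :=
  restrict_insert_embed_of_ne (fun hde => hed (h.eq_of_i_eq he hd hde.symm)) w

lemma Covers.cons (h : Covers μ R) {d : ChildPair T T'} (hi : d.i ∉ μ.map (·.i))
    (hj : d.j ∉ μ.map (·.j)) : Covers (d :: μ) R := by
  refine ⟨List.nodup_cons.mpr ⟨hi, h.1⟩, List.nodup_cons.mpr ⟨hj, h.2.1⟩,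
    fun z hz => ?_⟩
  rcases h.2.2 z hz with h | ⟨e, he, w, rfl⟩
  exacts [Or.inl h, Or.inr ⟨e, List.mem_cons_of_mem _ he, w, rfl⟩]

end ChildPair

open ChildPair

variable {T T' : CT} {μ : List (ChildPair T T')} {R : Set (T.Node × T'.Node)}
  {W V : Set (List Quant)} {m k : ℕ}

lemma PartialIso.of_covers (hb : T.isBlack = T'.isBlack) (hcov : Covers μ R)
    (hcol : ∀ d ∈ μ, d.c.1 = d.c'.1)
    (hloc : ∀ d ∈ μ, PartialIso d.c.2 d.c'.2 (d.restrict R)) :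
    PartialIso T T' R := by
  intro x hx y hy
  rcases hcov.mem_insert_root hx with rfl | ⟨d, hd, w, hw, rfl⟩ <;>
    rcases hcov.mem_insert_root hy with rfl | ⟨e, he, v, hv, rfl⟩
  · simp [rootNode, blackAt_nil, hb, not_edgeC_nil_right]
  · refine ⟨?_, by simp [rootNode, blackAt_nil, hb], fun col => ?_⟩
    · simp only [ChildPair.embed, Prod.map_fst, Prod.map_snd]
      exact ⟨fun h => (childNode_ne_root e.hc _ h.symm).elim,
        fun h => (childNode_ne_root e.hc' _ h.symm).elim⟩
    · simp only [ChildPair.embed, Prod.map_fst, Prod.map_snd, rootNode_val,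
        edgeC_root_childNode, (hloc e he).eq_root_iff hv, hcol e he]
  · refine ⟨?_, ?_, fun col => ?_⟩
    · simp only [ChildPair.embed, Prod.map_fst, Prod.map_snd]
      exact ⟨fun h => (childNode_ne_root d.hc _ h).elim,
        fun h => (childNode_ne_root d.hc' _ h).elim⟩
    · simp only [ChildPair.embed, Prod.map_fst, Prod.map_snd, blackAt_childNode]
      exact ((hloc d hd) w hw w hw).2.1
    · simp [rootNode, not_edgeC_nil_right]
  · by_cases hde : d.i = e.i
    · obtain rfl : d = e := hcov.eq_of_i_eq hd he hde
      obtain ⟨heq, hbl, hed⟩ := hloc d hd w hw v hv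
      simp only [ChildPair.embed, Prod.map_fst, Prod.map_snd, (childNode_injective _).eq_iff,
        blackAt_childNode, edgeC_childNode_childNode]
      exact ⟨heq, hbl, hed⟩
    · have hde' : d.j ≠ e.j := fun h => hde (by rw [List.inj_on_of_nodup_map hcov.2.1 hd he h])
      refine ⟨?_, ?_, fun col => ?_⟩
      · simp only [ChildPair.embed, Prod.map_fst, Prod.map_snd, Subtype.ext_iff, childNode_val,
          List.cons.injEq, hde, hde', false_and]
      · simp only [ChildPair.embed, Prod.map_fst, Prod.map_snd, blackAt_childNode]
        exact ((hloc d hd) w hw w hw).2.1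
      · simp only [ChildPair.embed, Prod.map_fst, Prod.map_snd, childNode_val]
        exact ⟨fun h => (hde (head_eq_of_edgeC h)).elim,
          fun h => (hde' (head_eq_of_edgeC h)).elim⟩

structure StarPair (T T' : CT) (W : Set (List Quant)) (m : ℕ) : Prop where
  isBlack_eq : T.isBlack = T'.isBlack
  colour_eq : ∀ d : ChildPair T T', d.c.1 = d.c'.1
  answer_ex : ∀ (i : ℕ) (c : Bool × CT), T.children[i]? = some c →
    ∀ S : Finset ℕ, S.card < m → ∀ a : c.2.Node,
      ∃ j c', ∃ _ : T'.children[j]? = some c', j ∉ S ∧ ∃ b : c'.2.Node,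
        Survives c.2 c'.2 (wordsAfter W [.ex]) m ({(a, b)} : Set (c.2.Node × c'.2.Node))
  answer_fa : ∀ (j : ℕ) (c' : Bool × CT), T'.children[j]? = some c' →
    ∀ S : Finset ℕ, S.card < m → ∀ b : c'.2.Node,
      ∃ i c, ∃ _ : T.children[i]? = some c, i ∉ S ∧ ∃ a : c.2.Node,
        Survives c.2 c'.2 (wordsAfter W [.fa]) m ({(a, b)} : Set (c.2.Node × c'.2.Node))

lemma StarPair.flip (h : StarPair T T' W m) : StarPair T' T (dualWords W) m where
  isBlack_eq := h.isBlack_eq.symm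
  colour_eq d := (h.colour_eq d.flip).symm
  answer_ex j c' hc' S hS b := by
    obtain ⟨i, c, hc, hiS, a, ha⟩ := h.answer_fa j c' hc' S hS b
    exact ⟨i, c, hc, hiS, a, preimage_swap_singleton a b ▸ ha.flip⟩
  answer_fa i c hc S hS a := by
    obtain ⟨j, c', hc', hjS, b, hb⟩ := h.answer_ex i c hc S hS a
    exact ⟨j, c', hc', hjS, b, preimage_swap_singleton a b ▸ hb.flip⟩

lemma StarPair.exists_answer_ex (hT : StarPair T T' W m) (hV : SublistClosed V) (hVW : V ⊆ W)
    (IH : ∀ (μ : List (ChildPair T T')) R, μ.length + k ≤ m → Covers μ R →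
      (∀ d ∈ μ, Survives d.c.2 d.c'.2 (wordsAfter V [.ex]) k (d.restrict R)) →
      Survives T T' (wordsAfter V [.ex]) k R)
    {μ : List (ChildPair T T')} {R : Set (T.Node × T'.Node)} (hlen : μ.length + (k + 1) ≤ m)
    (hcov : Covers μ R) (hloc : ∀ d ∈ μ, Survives d.c.2 d.c'.2 V (k + 1) (d.restrict R))
    (hex : [.ex] ∈ V) (a : T.Node) :
    ∃ b, Survives T T' (wordsAfter V [.ex]) k (insert (a, b) R) := by
  have hold : ∀ d ∈ μ, Survives d.c.2 d.c'.2 (wordsAfter V [.ex]) k (d.restrict R) :=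
    fun d hd => (hloc d hd).mono (wordsAfter_subset hV _) k.le_succ (Set.subset_insert _ _)
  have step : ∀ (μ' : List (ChildPair T T')) (d : ChildPair T T') w, d ∈ μ' →
      (∀ e ∈ μ', e ≠ d → e ∈ μ) → μ'.length + k ≤ m →
      Covers μ' (insert (d.embed w) R) →
      Survives d.c.2 d.c'.2 (wordsAfter V [.ex]) k (insert w (d.restrict R)) →
      Survives T T' (wordsAfter V [.ex]) k (insert (d.embed w) R) := by
    intro μ' d w hd hμ' hlen' hcov' hdw
    refine IH μ' _ hlen' hcov' fun e he => ?_
    by_cases hed : e = d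
    · subst hed
      rwa [restrict_insert_embed_self]
    · rw [hcov'.restrict_insert_embed hd he hed]
      exact hold e (hμ' e he hed)
  rcases Node.eq_root_or_childNode a with rfl | ⟨i, c, hc, a₀, rfl⟩
  · refine ⟨T'.rootNode, IH μ _ (by omega) hcov.insert_root fun d hd => ?_⟩
    rw [restrict_insert_root]
    exact hold d hd
  by_cases hmatch : ∃ d ∈ μ, d.i = i
  · obtain ⟨⟨_, j, c₀, c', hc₀, hc'⟩, hd, rfl⟩ := hmatch
    obtain rfl : c₀ = c := Option.some.inj (hc₀.symm.trans hc)
    obtain ⟨b₀, hb₀⟩ := (hloc _ hd).2.1 hex a₀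
    have := step μ _ (a₀, b₀) hd (fun e he _ => he) (by omega) (hcov.insert_embed hd _) hb₀
    exact ⟨childNode hc' b₀, this⟩
  · have hS : (μ.map (·.j)).toFinset.card < m :=
      (List.toFinset_card_le _).trans_lt (by simp; omega)
    obtain ⟨j, c', hc', hjS, b₀, hb₀⟩ := hT.answer_ex i c hc _ hS a₀
    set d : ChildPair T T' := ⟨i, j, c, c', hc, hc'⟩
    have hi : d.i ∉ μ.map (·.i) := by simpa using fun e he => hmatch ⟨e, he⟩
    have hcov' : Covers (d :: μ) R := hcov.cons hi (by simpa using hjS)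
    refine ⟨childNode hc' b₀, step (d :: μ) d (a₀, b₀) List.mem_cons_self
      (fun e he hne => (List.mem_cons.mp he).resolve_left hne) (by simp; omega)
      (hcov'.insert_embed List.mem_cons_self _) ?_⟩
    rw [hcov.restrict_eq_empty hi]
    exact hb₀.mono (fun u hu => hVW hu) (by omega) (by simp)

theorem StarPair.survives_of_covers (k : ℕ) :
    ∀ {T T' : CT} {W V : Set (List Quant)}, StarPair T T' W m → SublistClosed V → V ⊆ W →
    ∀ {μ : List (ChildPair T T')} {R : Set (T.Node × T'.Node)}, μ.length + k ≤ m →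
      Covers μ R → (∀ d ∈ μ, Survives d.c.2 d.c'.2 V k (d.restrict R)) →
      Survives T T' V k R := by
  induction k with
  | zero =>
    intro T T' W V hT _ _ μ R _ hcov hloc
    exact PartialIso.of_covers hT.isBlack_eq hcov (fun d _ => hT.colour_eq d)
      fun d hd => (hloc d hd).partialIso
  | succ k ih =>
    intro T T' W V hT hV hVW μ R hlen hcov hloc
    refine ⟨PartialIso.of_covers hT.isBlack_eq hcov (fun d _ => hT.colour_eq d)
      fun d hd => (hloc d hd).partialIso, fun hex a => ?_, fun hfa b => ?_⟩
    · exact hT.exists_answer_ex hV hVW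
        (fun μ R => ih hT (sublistClosed_wordsAfter hV _) ((wordsAfter_subset hV _).trans hVW))
        hlen hcov hloc hex a
    · obtain ⟨a, ha⟩ := hT.flip.exists_answer_ex (sublistClosed_dualWords hV)
        (fun u hu => hVW hu)
        (fun μ R => ih hT.flip (sublistClosed_wordsAfter (sublistClosed_dualWords hV) _)
          ((wordsAfter_subset (sublistClosed_dualWords hV) _).trans fun u hu => hVW hu))
        (μ := μ.map ChildPair.flip) (R := Prod.swap ⁻¹' R) (by simpa using hlen) hcov.flip
        (by
          simp only [List.mem_map, forall_exists_index, and_imp, forall_apply_eq_imp_iff₂,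
            restrict_flip]
          exact fun d hd => (hloc d hd).flip)
        hfa b
      refine ⟨a, survives_flip_iff.mp ?_⟩
      rw [preimage_swap_insert]
      exact ha

theorem StarPair.survives (hT : StarPair T T' W m) (hW : SublistClosed W) :
    Survives T T' W m ∅ :=
  survives_of_covers m hT hW subset_rfl (μ := []) (by simp)
    ⟨List.nodup_nil, List.nodup_nil, by simp⟩ (by simp)

end Stars

section Construction

def ManyCopies {α : Type*} (L : List α) (c : α) (m : ℕ) : Prop :=
  ∀ S : Finset ℕ, S.card < m → ∃ j ∉ S, L[j]? = some c

lemma manyCopies_append_replicate_append {α : Type*} (L₁ L₂ : List α) (c : α) (m : ℕ) :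
    ManyCopies (L₁ ++ List.replicate m c ++ L₂) c m := by
  intro S hS
  have hcard : S.card < (Finset.Ico L₁.length (L₁.length + m)).card := by simpa using hS
  obtain ⟨j, hj, hjS⟩ := Finset.exists_mem_notMem_of_card_lt_card hcard
  rw [Finset.mem_Ico] at hj
  refine ⟨j, hjS, ?_⟩
  rw [List.append_assoc, List.getElem?_append_right (by omega),
    List.getElem?_append_left (by simp; omega), List.getElem?_replicate, if_pos (by omega)]

lemma ManyCopies.cons {α : Type*} {L : List α} {c : α} {m : ℕ} (h : ManyCopies L c m)
    (x : α) : ManyCopies (x :: L) c m := by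
  intro S hS
  obtain ⟨j, hjS, hj⟩ := h (S.image (· - 1)) (Finset.card_image_le.trans_lt hS)
  exact ⟨j + 1, fun h => hjS (Finset.mem_image.mpr ⟨j + 1, h, rfl⟩), hj⟩

variable {X Y : CT} {W : Set (List Quant)} {m : ℕ}

lemma survives_joinRoots_same_left (hb : Y.isBlack = X.isBlack) (hW : SublistClosed W) {Y' : CT}
    (hb' : Y'.isBlack = X.isBlack) (hY : Survives Y Y' W m ∅) (x : X.Node) :
    Survives (X.joinRoots Y) (X.joinRoots Y') W m {(joinLeft X Y x, joinLeft X Y' x)} :=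
  (Survives.joinRoots hb hb' hW (survives_diag (R := {(x, x)}) (by simp)) hY).mono subset_rfl
    le_rfl (by simp [joinPos])

lemma survives_joinRoots_same_right (hb : Y.isBlack = X.isBlack) (hW : SublistClosed W) {X' : CT}
    (hb' : Y.isBlack = X'.isBlack) (hX : Survives X X' W m ∅) (y : Y.Node) :
    Survives (X.joinRoots Y) (X'.joinRoots Y) W m {(joinRight hb y, joinRight hb' y)} :=
  (Survives.joinRoots hb hb' hW hX (survives_diag (R := {(y, y)}) (by simp))).mono subset_rfl
    le_rfl (by simp [joinPos])

/-- `X.joinRoots Y.swap` is the tree `D^{X,Y}` of the construction. -/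
lemma exists_survives_joinRoots_swap_self (hX : X.isBlack = false) (hY : Y.isBlack = false)
    (hW : SublistClosed W) (hXY : Survives X Y W m ∅) {L : List (Bool × CT)}
    (hXY_many : ManyCopies L (true, X.joinRoots Y.swap) m)
    (hYX_many : ManyCopies L (true, Y.joinRoots X.swap) m) {S : Finset ℕ} (hS : S.card < m)
    (a : (X.joinRoots X.swap).Node) :
    ∃ j c, ∃ _ : L[j]? = some c, j ∉ S ∧ ∃ b : c.2.Node,
      Survives (X.joinRoots X.swap) c.2 W m
        ({(a, b)} : Set ((X.joinRoots X.swap).Node × c.2.Node)) := by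
  have hXs : X.swap.isBlack = X.isBlack := isBlack_swap X
  have hYs : Y.swap.isBlack = X.isBlack := by rw [isBlack_swap, hX, hY]
  have hXYs : X.swap.isBlack = Y.isBlack := by rw [isBlack_swap, hX, hY]
  rcases joinRoots_node_cases hXs a with ⟨x, rfl⟩ | ⟨y, rfl⟩
  · obtain ⟨j, hjS, hj⟩ := hXY_many S hS
    exact ⟨j, _, hj, hjS, joinLeft X Y.swap x,
      survives_joinRoots_same_left hXs hW hYs (hXY.swap.mono subset_rfl le_rfl (by simp)) x⟩
  · obtain ⟨j, hjS, hj⟩ := hYX_many S hS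
    exact ⟨j, _, hj, hjS, joinRight hXYs y, survives_joinRoots_same_right hXs hW hXYs hXY y⟩

lemma starPair_of_survives (hX : X.isBlack = false) (hY : Y.isBlack = false)
    (hW : SublistClosed W) (hXY : Survives X Y (wordsAfter W [.ex]) m ∅)
    {L : List (Bool × CT)}
    (hL : ∀ c ∈ L, c = (true, X.joinRoots Y.swap) ∨ c = (true, Y.joinRoots X.swap))
    (hXY_many : ManyCopies L (true, X.joinRoots Y.swap) m)
    (hYX_many : ManyCopies L (true, Y.joinRoots X.swap) m) :
    StarPair (node false ((true, X.joinRoots X.swap) :: L)) (node false L) W m := by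
  have hW' := sublistClosed_wordsAfter hW [.ex]
  have hL_many : ∀ c ∈ L, ManyCopies L c m := by
    intro c hc
    rcases hL c hc with rfl | rfl
    exacts [hXY_many, hYX_many]
  have same : ∀ (c : Bool × CT) (V : Set (List Quant)) (a : c.2.Node),
      Survives c.2 c.2 V m ({(a, a)} : Set (c.2.Node × c.2.Node)) :=
    fun _ _ _ => survives_diag (by simp)
  refine ⟨rfl, fun d => ?_, fun i c hc S hS a => ?_, fun j c hc S hS b => ?_⟩
  · have hred : ∀ c ∈ (true, X.joinRoots X.swap) :: L, c.1 = true := by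
      rintro c (_ | ⟨_, hc⟩)
      · rfl
      · rcases hL c hc with rfl | rfl <;> rfl
    exact (hred _ (List.mem_of_getElem? d.hc)).trans
      (hred _ (List.mem_cons_of_mem _ (List.mem_of_getElem? d.hc'))).symm
  · cases i with
    | zero =>
      obtain rfl : (true, X.joinRoots X.swap) = c := Option.some.inj hc
      exact exists_survives_joinRoots_swap_self hX hY hW' hXY hXY_many hYX_many hS a
    | succ i =>
      obtain ⟨j, hjS, hj⟩ := hL_many c (List.mem_of_getElem? hc) S hS
      exact ⟨j, c, hj, hjS, a, same c _ a⟩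
  · obtain ⟨i, hiS, hi⟩ := (hL_many c (List.mem_of_getElem? hc)).cons
      (true, X.joinRoots X.swap) S hS
    exact ⟨i, c, hi, hiS, b, same c _ b⟩

end Construction

end CT

lemma isBlack_ABt (s : Quant) (q : List Quant) (m : ℕ) :
    (ABt s q m).1.isBlack = false ∧ (ABt s q m).2.isBlack = false := by
  cases s <;> cases q <;> exact ⟨rfl, rfl⟩

theorem survives_Atil_Btil (m : ℕ) :
    ∀ p : List Quant, Survives (Atil p m) (Btil p m) (avoiding p) m ∅
  | [] => survives_diag fun _ h => h.elim
  | [.ex] => by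
    rw [← survives_flip_iff, Set.preimage_empty, dualWords_avoiding]
    exact survives_of_isEmbedding (reindexes_starT (Nat.zero_le 1) le_rfl).isEmbedding
      (fun u hu => not_mem_of_mem_avoiding_singleton hu) (by simp)
  | [.fa] =>
    survives_of_isEmbedding (reindexes_starT le_rfl (Nat.zero_le 1)).isEmbedding
      (fun u hu => not_mem_of_mem_avoiding_singleton hu) (by simp)
  | .ex :: s :: q => by
    obtain ⟨hA, hB⟩ := isBlack_ABt s q m
    refine (starPair_of_survives hA hB (sublistClosed_avoiding _) ?_ ?_ ?_ ?_).survives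
      (sublistClosed_avoiding _)
    · rw [wordsAfter_avoiding_cons]
      exact survives_Atil_Btil m (s :: q)
    · simp only [List.mem_append, List.mem_replicate]
      tauto
    · simpa using manyCopies_append_replicate_append [] _ _ m
    · simpa using manyCopies_append_replicate_append _ [] _ m
  | .fa :: s :: q => by
    obtain ⟨hA, hB⟩ := isBlack_ABt s q m
    rw [← survives_flip_iff, Set.preimage_empty]
    refine (starPair_of_survives hB hA (sublistClosed_dualWords (sublistClosed_avoiding _))
      ?_ ?_ ?_ ?_).survives (sublistClosed_dualWords (sublistClosed_avoiding _))
    · rw [wordsAfter_dualWords, Quant.dual, wordsAfter_avoiding_cons,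
        ← Set.preimage_empty (f := Prod.swap)]
      exact (survives_Atil_Btil m (s :: q)).flip
    · simp only [List.mem_append, List.mem_replicate]
      tauto
    · simpa using manyCopies_append_replicate_append _ [] _ m
    · simpa using manyCopies_append_replicate_append [] _ _ m

namespace QGraph

variable {G H : QGraph}

lemma nil_mem_words : [] ∈ G.Words :=
  ⟨[], List.isChain_nil, List.nil_sublist _⟩

lemma words_subset_union_left : G.Words ⊆ (G.union H).Words := by
  rintro u ⟨l, hl, hu⟩
  exact ⟨l.map (Sum.inl : G.V → (G.union H).V),
    List.isChain_map_of_isChain _ (fun _ _ => Sum.LiftRel.inl) hl,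
    by erw [List.map_map]; exact hu⟩

lemma words_subset_union_right : H.Words ⊆ (G.union H).Words := by
  rintro u ⟨l, hl, hu⟩
  exact ⟨l.map (Sum.inr : H.V → (G.union H).V),
    List.isChain_map_of_isChain _ (fun _ _ => Sum.LiftRel.inr) hl,
    by erw [List.map_map]; exact hu⟩

lemma exists_chain_of_reflTransGen {r x : G.V} (hrx : Relation.ReflTransGen G.arc r x)
    {l : List G.V} (hl : (x :: l).IsChain G.arc) :
    ∃ l', (r :: l').IsChain G.arc ∧ x :: l <+ r :: l' := by
  induction hrx using Relation.ReflTransGen.head_induction_on with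
  | refl => exact ⟨l, hl, .refl _⟩
  | head hry _ ih =>
    obtain ⟨l', hl', hsub⟩ := ih
    exact ⟨_ :: l', List.isChain_cons_cons.mpr ⟨hry, hl'⟩,
      hsub.trans (List.sublist_cons_self _ _)⟩

lemma cons_mem_words_addRoot (hG : ∀ x, ∃ r, G.isRoot r ∧ Relation.ReflTransGen G.arc r x)
    (s : Quant) {u : List Quant} (hu : u ∈ G.Words) : s :: u ∈ (G.addRoot s).Words := by
  obtain ⟨_ | ⟨x, l⟩, hl, hu⟩ := hu
  · refine ⟨[none], List.isChain_singleton _, ?_⟩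
    rw [List.sublist_nil.mp hu]
    exact List.Sublist.refl _
  · obtain ⟨r, hr, hrx⟩ := hG x
    obtain ⟨l', hl', hsub⟩ := exists_chain_of_reflTransGen hrx hl
    refine ⟨none :: (r :: l').map some, List.isChain_cons_cons.mpr ⟨hr, ?_⟩, ?_⟩
    · exact List.isChain_map_of_isChain (R := G.arc) (S := (G.addRoot s).arc) some
        (fun _ _ h => h) hl'
    · simpa [List.map_map, Function.comp_def, QGraph.addRoot] using
        hu.trans (hsub.map G.lab)

end QGraph

lemma NNF.qs_exists_root {L : FirstOrder.Language} {n : ℕ} (ψ : NNF L n) (x : ψ.qs.V) :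
    ∃ r, ψ.qs.isRoot r ∧ Relation.ReflTransGen ψ.qs.arc r x := by
  induction ψ with
  | verum | falsum | eq | ne | rel | nrel => exact x.elim
  | conj φ ψ ihφ ihψ | disj φ ψ ihφ ihψ =>
    rcases x with x | x
    · obtain ⟨r, hr, hrx⟩ := ihφ x
      refine ⟨.inl r, ?_, hrx.lift _ fun _ _ => Sum.LiftRel.inl⟩
      rintro (w | w) h <;> cases h
      exact hr w ‹_›
    · obtain ⟨r, hr, hrx⟩ := ihψ x
      refine ⟨.inr r, ?_, hrx.lift _ fun _ _ => Sum.LiftRel.inr⟩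
      rintro (w | w) h <;> cases h
      exact hr w ‹_›
  | ex θ ih | fa θ ih =>
    refine ⟨none, fun w h => by cases w <;> exact h, ?_⟩
    rcases x with _ | x
    · exact .refl
    · obtain ⟨r, hr, hrx⟩ := ih x
      exact .head (b := some r) hr (hrx.lift some fun _ _ h => h)

variable {s t : CT} {W : Set (List Quant)} {k : ℕ}

lemma dropLast_eq_nil_of_isRoot {P : Set (List Quant)} {v : (trieGraph P).V}
    (hv : (trieGraph P).isRoot v) : v.1.dropLast = [] := by
  obtain ⟨w, hw, q, hq, hpre⟩ := v
  by_contra hne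
  exact hv ⟨w.dropLast, hne, q, hq, (List.dropLast_prefix w).trans hpre⟩
    ⟨w.getLast hw, (List.dropLast_append_getLast hw).symm⟩

lemma setOf_mem_append_singleton {α : Type*} (h : List α) (x : α) :
    {z | z ∈ h ++ [x]} = insert x {z | z ∈ h} := by
  ext
  simp [or_comm]

/-- At the node of `𝓕(P)` spelling `w`, the word `w.dropLast` has already been played. -/
theorem dWinN_of_survives {P : Set (List Quant)} (hW : SublistClosed W) (hPW : P ⊆ W)
    (v : (trieGraph P).V) (h : List (s.Node × t.Node))
    (hS : Survives s t (wordsAfter W v.1.dropLast) k {z | z ∈ h}) :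
    DWinN (trieGraph P) s.Str t.Str k v h := by
  induction k generalizing v h with
  | zero => trivial
  | succ k ih =>
    obtain ⟨w, hw, q, hq, hpre⟩ := v
    have hsplit : w.dropLast ++ [w.getLast hw] = w := List.dropLast_append_getLast hw
    have hmove : [w.getLast hw] ∈ wordsAfter W w.dropLast := by
      change _ ∈ W
      rw [hsplit]
      exact hW hpre.sublist (hPW hq)
    have cont : ∀ a b, Survives s t (wordsAfter (wordsAfter W w.dropLast) [w.getLast hw]) k
        (insert (a, b) {z | z ∈ h}) →
        HistOK s.Str t.Str (h ++ [(a, b)]) ∧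
          ∀ v', (trieGraph P).arc ⟨w, hw, q, hq, hpre⟩ v' →
          DWinN (trieGraph P) s.Str t.Str k v' (h ++ [(a, b)]) := by
      intro a b hab
      rw [← setOf_mem_append_singleton, wordsAfter_wordsAfter, hsplit] at hab
      refine ⟨histOK_of_partialIso hab.partialIso, fun v' ⟨s', hs'⟩ => ih v' _ ?_⟩
      rwa [hs', List.dropLast_concat]
    rw [DWinN]
    split
    next hlab =>
      rw [show w.getLast hw = .ex from hlab] at hmove cont
      intro a
      obtain ⟨b, hb⟩ := hS.2.1 hmove a
      exact ⟨b, cont a b hb⟩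
    next hlab =>
      rw [show w.getLast hw = .fa from hlab] at hmove cont
      intro b
      obtain ⟨a, ha⟩ := hS.2.2 hmove b
      exact ⟨a, cont a b ha⟩

theorem dupWins_of_survives {P : Set (List Quant)} (hP : P.Finite) (hW : SublistClosed W)
    (hPW : P ⊆ W) (hS : Survives s t W (Nat.card (forestOf P hP).V + 1) ∅) :
    DupWins (forestOf P hP) s.Str t.Str := by
  refine ⟨histOK_of_partialIso (hS.partialIso.mono (by simp)), fun v hv => ?_⟩
  refine dWinN_of_survives hW hPW v [] ?_
  rw [dropLast_eq_nil_of_isRoot hv, wordsAfter_nil]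
  simpa using hS

lemma NNF.exists_fuel_of_words_addRoot {n : ℕ} (θ : NNF tauPlus (n + 1)) {q : Quant}
    (hW : (θ.qs.addRoot q).Words ⊆ W) (hk : ∀ u ∈ (θ.qs.addRoot q).Words, u.length ≤ k) :
    ∃ k₀, k = k₀ + 1 ∧ [q] ∈ W ∧ θ.qs.Words ⊆ wordsAfter W [q] ∧
      ∀ u ∈ θ.qs.Words, u.length ≤ k₀ := by
  have hcons : ∀ {u}, u ∈ θ.qs.Words → q :: u ∈ (θ.qs.addRoot q).Words :=
    QGraph.cons_mem_words_addRoot θ.qs_exists_root q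
  have h1 := hk _ (hcons QGraph.nil_mem_words)
  simp only [List.length_singleton] at h1
  exact ⟨k - 1, by omega, hW (hcons QGraph.nil_mem_words), fun u hu => hW (hcons hu),
    fun u hu => by have := hk _ (hcons hu); simp at this; omega⟩

theorem realize_of_survives {n : ℕ} (ψ : NNF tauPlus n) (v : Fin n → s.Node × t.Node)
    (hψW : ψ.qs.Words ⊆ W) (hψk : ∀ u ∈ ψ.qs.Words, u.length ≤ k)
    (hS : Survives s t W k (Set.range v))
    (hA : ψ.Realize s.Str (Prod.fst ∘ v)) : ψ.Realize t.Str (Prod.snd ∘ v) := by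
  induction ψ generalizing W k with
  | verum => trivial
  | falsum => exact hA.elim
  | eq t₁ t₂ => exact ((pIso_of_partialIso hS.partialIso).1 t₁ t₂).mp hA
  | ne t₁ t₂ => exact fun h => hA (((pIso_of_partialIso hS.partialIso).1 t₁ t₂).mpr h)
  | rel Rl ts => exact ((pIso_of_partialIso hS.partialIso).2 _ Rl ts).mp hA
  | nrel Rl ts => exact fun h => hA (((pIso_of_partialIso hS.partialIso).2 _ Rl ts).mpr h)
  | conj φ ψ ihφ ihψ =>
    exact ⟨ihφ v (QGraph.words_subset_union_left.trans hψW)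
        (fun u hu => hψk u (QGraph.words_subset_union_left hu)) hS hA.1,
      ihψ v (QGraph.words_subset_union_right.trans hψW)
        (fun u hu => hψk u (QGraph.words_subset_union_right hu)) hS hA.2⟩
  | disj φ ψ ihφ ihψ =>
    rcases hA with hA | hA
    · exact Or.inl (ihφ v (QGraph.words_subset_union_left.trans hψW)
        (fun u hu => hψk u (QGraph.words_subset_union_left hu)) hS hA)
    · exact Or.inr (ihψ v (QGraph.words_subset_union_right.trans hψW)
        (fun u hu => hψk u (QGraph.words_subset_union_right hu)) hS hA)
  | ex θ ih =>
    obtain ⟨k, rfl, hmove, hθW, hθk⟩ := θ.exists_fuel_of_words_addRoot hψW hψk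
    obtain ⟨a, ha⟩ := hA
    obtain ⟨b, hb⟩ := hS.2.1 hmove a
    have := ih (Fin.snoc v (a, b)) hθW hθk (by rwa [Fin.range_snoc])
    rw [Fin.comp_snoc, Fin.comp_snoc] at this
    exact ⟨b, this ha⟩
  | fa θ ih =>
    obtain ⟨k, rfl, hmove, hθW, hθk⟩ := θ.exists_fuel_of_words_addRoot hψW hψk
    intro b
    obtain ⟨a, ha⟩ := hS.2.2 hmove b
    have := ih (Fin.snoc v (a, b)) hθW hθk (by rwa [Fin.range_snoc])
    rw [Fin.comp_snoc, Fin.comp_snoc] at this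
    exact this (hA a)

theorem ctSat_of_survives (ψ : NNF tauPlus 0) (hψW : ψ.qs.Words ⊆ W)
    (hψk : ∀ u ∈ ψ.qs.Words, u.length ≤ k) (hS : Survives s t W k ∅) (hA : CTSat s ψ) :
    CTSat t ψ := by
  let v : Fin 0 → s.Node × t.Node := fun i => i.elim0
  have hv : ∀ {α : Type} (f g : Fin 0 → α), f = g := fun _ _ => Subsingleton.elim _ _
  unfold CTSat at hA ⊢
  rw [hv (fun i => i.elim0) (Prod.fst ∘ v)] at hA
  rw [hv (fun i => i.elim0) (Prod.snd ∘ v)]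
  exact realize_of_survives ψ v hψW hψk (by simpa [v] using hS) hA

theorem duplicator_wins_fpm_game_general (p : List Quant) (m : ℕ) :
    DupWins (forestOf (fpm p m) (fpm_finite p m)) (Atil p m).Str (Btil p m).Str ∧
      ∀ ψ : NNF tauPlus 0, ψ.qs.Words ⊆ fpm p m →
        CTSat (Atil p m) ψ → CTSat (Btil p m) ψ := by
  have hS : Survives (Atil p m) (Btil p m) (fpm p m) m ∅ :=
    (survives_Atil_Btil m p).mono (fun _ hu => hu.1) le_rfl (Set.empty_subset _)
  exact ⟨dupWins_of_survives _ (sublistClosed_fpm p m) subset_rfl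
      (hS.of_length_le (fun _ hu => hu.2) _),
    fun ψ hψ => ctSat_of_survives ψ hψ (fun _ hu => (hψ hu).2) hS⟩

theorem duplicator_wins_fpm_game (p : List Quant) (hp : p ≠ []) (m : ℕ) (hm : 0 < m) :
    DupWins (forestOf (fpm p m) (fpm_finite p m)) (Atil p m).Str (Btil p m).Str ∧
      ∀ ψ : NNF tauPlus 0, ψ.qs.Words ⊆ fpm p m →
        CTSat (Atil p m) ψ → CTSat (Btil p m) ψ :=
  duplicator_wins_fpm_game_general p m

end QSH
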